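/- arXiv:2209.07482 — 7 statements merged into one kernel-verified Lean document; each statement's English description precedes it below -/
import Mathlib

section
/- Let g : [a,b] × ℝ^d → ℝ^d be continuous, satisfy the linear growth bound ‖g(t,y)‖ ≤ K(1+‖y‖) for all (t,y), and satisfy a local one-sided Lipschitz condition (for every compact U ⊆ ℝ^d there exists H_U ∈ ℝ such that ⟨y₁−y₂, g(t,y₁)−g(t,y₂)⟩ ≤ H_U‖y₁−y₂‖² for all t ∈ [a,b], y₁,y₂ ∈ U). Then the initial value problem z'(t) = g(t,z(t)), z(a) = ξ has at most one solution z ∈ C¹([a,b]; ℝ^d). -/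
open Set

/-- Uniqueness of solutions under continuity, linear growth and a local
one-sided Lipschitz condition. -/
theorem euler_stmt_0
    (a b : ℝ) (hab : a < b) (d : ℕ) (hd : 0 < d) (K : ℝ) (hK : 0 < K)
    (ξ : EuclideanSpace ℝ (Fin d))
    (g : ℝ → EuclideanSpace ℝ (Fin d) → EuclideanSpace ℝ (Fin d))
    (hg_cont : ContinuousOn (fun p : ℝ × EuclideanSpace ℝ (Fin d) => g p.1 p.2)
      (Icc a b ×ˢ univ))
    (hg_growth : ∀ t ∈ Icc a b, ∀ y, ‖g t y‖ ≤ K * (1 + ‖y‖))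
    (hg_osl : ∀ U : Set (EuclideanSpace ℝ (Fin d)), IsCompact U →
      ∃ H : ℝ, ∀ t ∈ Icc a b, ∀ y₁ ∈ U, ∀ y₂ ∈ U,
        (inner ℝ (y₁ - y₂) (g t y₁ - g t y₂) : ℝ) ≤ H * ‖y₁ - y₂‖ ^ 2)
    (z w : ℝ → EuclideanSpace ℝ (Fin d))
    (hz : ∀ t ∈ Icc a b, HasDerivWithinAt z (g t (z t)) (Icc a b) t)
    (hw : ∀ t ∈ Icc a b, HasDerivWithinAt w (g t (w t)) (Icc a b) t)
    (hza : z a = ξ) (hwa : w a = ξ) :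
    ∀ t ∈ Icc a b, z t = w t := by
  -- continuity of z and w on [a,b]
  have hzc : ContinuousOn z (Icc a b) := fun t ht => (hz t ht).continuousWithinAt
  have hwc : ContinuousOn w (Icc a b) := fun t ht => (hw t ht).continuousWithinAt
  -- the compact set containing the ranges of z and w
  set U : Set (EuclideanSpace ℝ (Fin d)) := z '' Icc a b ∪ w '' Icc a b with hU
  have hUc : IsCompact U :=
    (isCompact_Icc.image_of_continuousOn hzc).union (isCompact_Icc.image_of_continuousOn hwc)
  obtain ⟨H, hH⟩ := hg_osl U hUc
  -- φ t = ‖z t - w t‖²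
  set u : ℝ → EuclideanSpace ℝ (Fin d) := fun t => z t - w t with hu
  set φ : ℝ → ℝ := fun t => ‖u t‖ ^ 2 with hφ
  have hφc : ContinuousOn φ (Icc a b) := ((hzc.sub hwc).norm.pow 2)
  have hφ' : ∀ t ∈ Icc a b,
      HasDerivWithinAt φ (2 * inner ℝ (u t) (g t (z t) - g t (w t))) (Icc a b) t := by
    intro t ht
    have hu' : HasDerivWithinAt u (g t (z t) - g t (w t)) (Icc a b) t :=
      (hz t ht).sub (hw t ht)
    have := (HasDerivWithinAt.inner ℝ hu' hu')
    have heq : ∀ s, φ s = (inner ℝ (u s) (u s) : ℝ) := by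
      intro s; exact (real_inner_self_eq_norm_sq (u s)).symm
    have h2 : (inner ℝ (u t) (g t (z t) - g t (w t)) : ℝ)
        + (inner ℝ (g t (z t) - g t (w t)) (u t) : ℝ)
        = 2 * inner ℝ (u t) (g t (z t) - g t (w t)) := by
      rw [real_inner_comm (g t (z t) - g t (w t)) (u t)]; ring
    rw [show φ = fun s => (inner ℝ (u s) (u s) : ℝ) from funext heq]
    rw [← h2]
    exact this
  -- Gronwall: φ ≤ 0 on [a,b]
  have key : ∀ t ∈ Icc a b, φ t ≤ gronwallBound 0 (2 * H) 0 (t - a) := by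
    apply le_gronwallBound_of_liminf_deriv_right_le hφc
      (f' := fun t => 2 * inner ℝ (u t) (g t (z t) - g t (w t)))
    · intro x hx r hr
      have hmem : Icc a b ∈ nhdsWithin x (Ici x) := Icc_mem_nhdsGE_of_mem hx
      have hd : HasDerivWithinAt φ (2 * inner ℝ (u x) (g x (z x) - g x (w x))) (Ici x) x :=
        (hφ' x (Ico_subset_Icc_self hx)).mono_of_mem_nhdsWithin hmem
      exact hd.liminf_right_slope_le hr
    · simp [hφ, hu, hza, hwa]
    · intro x hx
      have hx' := Ico_subset_Icc_self hx
      have hzU : z x ∈ U := Or.inl ⟨x, hx', rfl⟩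
      have hwU : w x ∈ U := Or.inr ⟨x, hx', rfl⟩
      have := hH x hx' (z x) hzU (w x) hwU
      have : (2 : ℝ) * inner ℝ (u x) (g x (z x) - g x (w x)) ≤ 2 * (H * ‖u x‖ ^ 2) := by
        have := hH x hx' (z x) hzU (w x) hwU
        nlinarith [this]
      calc (2 : ℝ) * inner ℝ (u x) (g x (z x) - g x (w x)) ≤ 2 * (H * ‖u x‖ ^ 2) := this
        _ = 2 * H * φ x + 0 := by ring
  intro t ht
  have h0 := key t ht
  rw [gronwallBound_ε0_δ0] at h0
  have : ‖z t - w t‖ ^ 2 ≤ 0 := h0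
  have : ‖z t - w t‖ = 0 := by nlinarith [norm_nonneg (z t - w t)]
  exact sub_eq_zero.mp (norm_eq_zero.mp this)
end

section
/- Euler error bound under exact information: let g : [a,b] × ℝ^d → ℝ^d be continuous, satisfy ‖g(t,y)‖ ≤ K(1+‖y‖), the local one-sided Lipschitz condition (G3), and the local (α,β)-Hölder condition (for every compact U there exists L_U with ‖g(t₁,y₁) − g(t₂,y₂)‖ ≤ L_U(|t₁−t₂|^α + ‖y₁−y₂‖^β) for all t₁,t₂ ∈ [a,b], y₁,y₂ ∈ U), where α,β ∈ (0,1]. Let z be the unique solution of z' = g(t,z), z(a) = ξ, and let l_n be the piecewise linear interpolant of the Euler iterates y₀ = ξ, y_{k+1} = y_k + h g(t_k, y_k) with h = (b−a)/n. Then there exists C̄₁ ∈ [0,∞) (independent of n) such that for all n ∈ ℕ, sup_{a ≤ t ≤ b} ‖z(t) − l_n(t)‖ ≤ C̄₁ (1+‖ξ‖)(h^α + h^β). -/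
set_option maxHeartbeats 1000000
open Set Filter Real
open scoped Topology RealInnerProductSpace

theorem my_gronwall {v v' : ℝ → ℝ} {δ Kq ε a b : ℝ}
    (hv : ContinuousOn v (Icc a b))
    (hv' : ∀ x ∈ Ico a b, HasDerivWithinAt v (v' x) (Ici x) x)
    (ha : v a ≤ δ) (bound : ∀ x ∈ Ico a b, v' x ≤ Kq * v x + ε) :
    ∀ x ∈ Icc a b, v x ≤ gronwallBound δ Kq ε (x - a) := by
  apply le_gronwallBound_of_liminf_deriv_right_le hv _ ha bound
  intro x hx r hr
  have h1 : Tendsto (slope v x) (𝓝[>] x) (𝓝 (v' x)) := by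
    have h := hasDerivWithinAt_iff_tendsto_slope.mp (hv' x hx)
    rwa [Set.Ici_sdiff_left] at h
  have h2 : ∀ᶠ z in 𝓝[>] x, slope v x z < r := h1.eventually_lt_const hr
  refine (h2.mono ?_).frequently
  intro z hz
  simpa [slope_def_field, div_eq_inv_mul] using hz

theorem gb_le {δ ε Kq s : ℝ} (hK : 0 < Kq) (hδ : 0 ≤ δ) (hε : 0 ≤ ε) (hs : 0 ≤ s) :
    gronwallBound δ Kq ε s ≤ (δ + ε * s) * Real.exp (Kq * s) := by
  rw [gronwallBound_of_K_ne_0 hK.ne']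
  have hu : 0 ≤ Kq * s := by positivity
  have h1 : Real.exp (-(Kq * s)) * Real.exp (Kq * s) = 1 := by
    rw [← Real.exp_add]; simp
  have key : Real.exp (Kq * s) - 1 ≤ (Kq * s) * Real.exp (Kq * s) := by
    nlinarith [Real.add_one_le_exp (-(Kq * s)), (Real.exp_pos (Kq * s)).le]
  have h2 : ε / Kq * (Real.exp (Kq * s) - 1) ≤ ε * s * Real.exp (Kq * s) := by
    have := mul_le_mul_of_nonneg_left key (div_nonneg hε hK.le)
    calc ε / Kq * (Real.exp (Kq * s) - 1) ≤ ε / Kq * ((Kq * s) * Real.exp (Kq * s)) := this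
      _ = ε * s * Real.exp (Kq * s) := by field_simp
  nlinarith [Real.exp_pos (Kq * s)]

theorem rpow_le_one_add {M β : ℝ} (hM : 0 ≤ M) (hβ0 : 0 ≤ β) (hβ1 : β ≤ 1) :
    M ^ β ≤ 1 + M := by
  rcases le_total M 1 with h | h
  · have := Real.rpow_le_one hM h hβ0
    linarith
  · have h2 : M ^ β ≤ M ^ (1 : ℝ) := Real.rpow_le_rpow_of_exponent_le h hβ1
    rw [Real.rpow_one] at h2
    linarith

/-- Per-interval squared-error Grönwall estimate. -/
theorem interval_err {E : Type*} [NormedAddCommGroup E] [InnerProductSpace ℝ E]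
    (g : ℝ → E → E) (z : ℝ → E) (c e : ℝ) (yk gk : E) (Kp δ : ℝ)
    (hz_cont : ContinuousOn z (Icc c e))
    (hz' : ∀ t ∈ Ico c e, HasDerivWithinAt z (g t (z t)) (Ici t) t)
    (hbound : ∀ t ∈ Ico c e,
      2 * ⟪z t - (yk + (t - c) • gk), g t (z t) - gk⟫ ≤
        Kp * ‖z t - (yk + (t - c) • gk)‖ ^ 2 + δ ^ 2) :
    ∀ t ∈ Icc c e, ‖z t - (yk + (t - c) • gk)‖ ^ 2 ≤
      gronwallBound (‖z c - yk‖ ^ 2) Kp (δ ^ 2) (t - c) := by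
  set f : ℝ → E := fun t => z t - (yk + (t - c) • gk) with hf
  have hl_cont : ContinuousOn (fun t : ℝ => yk + (t - c) • gk) (Icc c e) :=
    (continuous_const.add ((continuous_id.sub continuous_const).smul continuous_const)).continuousOn
  have hf_cont : ContinuousOn f (Icc c e) := hz_cont.sub hl_cont
  have hv_cont : ContinuousOn (fun t => ⟪f t, f t⟫) (Icc c e) := hf_cont.inner hf_cont
  have hf' : ∀ t ∈ Ico c e, HasDerivWithinAt f (g t (z t) - gk) (Ici t) t := by
    intro t ht
    have hl : HasDerivAt (fun t : ℝ => yk + (t - c) • gk) gk t := by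
      simpa using ((((hasDerivAt_id t).sub_const c).smul_const gk).const_add yk)
    exact (hz' t ht).sub hl.hasDerivWithinAt
  have hv' : ∀ t ∈ Ico c e,
      HasDerivWithinAt (fun t => ⟪f t, f t⟫) (2 * ⟪f t, g t (z t) - gk⟫) (Ici t) t := by
    intro t ht
    have := ((hf' t ht).inner ℝ (hf' t ht))
    have e : 2 * ⟪f t, g t (z t) - gk⟫ = ⟪f t, g t (z t) - gk⟫ + ⟪g t (z t) - gk, f t⟫ := by
      rw [real_inner_comm (g t (z t) - gk) (f t)]
      ring
    rw [e]; exact this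
  have hva : (fun t => ⟪f t, f t⟫) c ≤ ‖z c - yk‖ ^ 2 := by
    simp only [hf]
    rw [real_inner_self_eq_norm_sq]
    simp
  have hbd : ∀ t ∈ Ico c e, (fun t => 2 * ⟪f t, g t (z t) - gk⟫) t ≤
      Kp * (fun t => ⟪f t, f t⟫) t + δ ^ 2 := by
    intro t ht
    have := hbound t ht
    simpa [real_inner_self_eq_norm_sq] using this
  intro t ht
  have := my_gronwall hv_cont hv' hva hbd t ht
  rwa [real_inner_self_eq_norm_sq] at this

/-- Error bound for the Euler scheme under exact information. -/
theorem euler_stmt_5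
    (a b : ℝ) (hab : a < b) (d : ℕ) (hd : 0 < d) (K : ℝ) (hK : 0 < K)
    (α β : ℝ) (hα : α ∈ Ioc (0:ℝ) 1) (hβ : β ∈ Ioc (0:ℝ) 1)
    (ξ : EuclideanSpace ℝ (Fin d))
    (g : ℝ → EuclideanSpace ℝ (Fin d) → EuclideanSpace ℝ (Fin d))
    (hg_cont : ContinuousOn (fun p : ℝ × EuclideanSpace ℝ (Fin d) => g p.1 p.2)
      (Icc a b ×ˢ univ))
    (hg_growth : ∀ t ∈ Icc a b, ∀ y, ‖g t y‖ ≤ K * (1 + ‖y‖))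
    (hg_osl : ∀ U : Set (EuclideanSpace ℝ (Fin d)), IsCompact U →
      ∃ H : ℝ, ∀ t ∈ Icc a b, ∀ y₁ ∈ U, ∀ y₂ ∈ U,
        (inner ℝ (y₁ - y₂) (g t y₁ - g t y₂) : ℝ) ≤ H * ‖y₁ - y₂‖ ^ 2)
    (hg_holder : ∀ U : Set (EuclideanSpace ℝ (Fin d)), IsCompact U →
      ∃ L : ℝ, 0 < L ∧ ∀ t₁ ∈ Icc a b, ∀ t₂ ∈ Icc a b, ∀ y₁ ∈ U, ∀ y₂ ∈ U,
        ‖g t₁ y₁ - g t₂ y₂‖ ≤ L * (|t₁ - t₂| ^ α + ‖y₁ - y₂‖ ^ β))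
    (z : ℝ → EuclideanSpace ℝ (Fin d))
    (hz : ∀ t ∈ Icc a b, HasDerivWithinAt z (g t (z t)) (Icc a b) t)
    (hza : z a = ξ) :
    ∃ C : ℝ, 0 ≤ C ∧ ∀ n : ℕ, 0 < n →
      ∀ y : ℕ → EuclideanSpace ℝ (Fin d), y 0 = ξ →
      (∀ k < n, y (k + 1) = y k + ((b - a) / n) • g (a + k * ((b - a) / n)) (y k)) →
      ∀ k < n, ∀ t ∈ Icc (a + k * ((b - a) / n)) (a + (k + 1) * ((b - a) / n)),
        ‖z t - (y k + (t - (a + k * ((b - a) / n))) • g (a + k * ((b - a) / n)) (y k))‖ ≤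
          C * (1 + ‖ξ‖) * (((b - a) / n) ^ α + ((b - a) / n) ^ β) := by
  obtain ⟨hα0, hα1⟩ := hα
  obtain ⟨hβ0, hβ1⟩ := hβ
  have hba : (0:ℝ) < b - a := sub_pos.mpr hab
  -- facts about z
  have hz_cont : ContinuousOn z (Icc a b) := fun t ht => (hz t ht).continuousWithinAt
  have hz' : ∀ t ∈ Ico a b, HasDerivWithinAt z (g t (z t)) (Ici t) t := by
    intro t ht
    refine (hz t (Ico_subset_Icc_self ht)).mono_of_mem_nhdsWithin ?_
    refine mem_nhdsWithin.mpr ⟨Iio b, isOpen_Iio, ht.2, ?_⟩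
    rintro x ⟨hx1, hx2⟩
    exact ⟨le_trans ht.1 hx2, le_of_lt hx1⟩
  -- a priori bound on z
  obtain ⟨Rz, hRzdef⟩ : ∃ x : ℝ, x = (‖ξ‖ + K * (b - a)) * Real.exp (K * (b - a)) := ⟨_, rfl⟩
  have hRz0 : 0 ≤ Rz := by rw [hRzdef]; positivity
  have hz_bd : ∀ t ∈ Icc a b, ‖z t‖ ≤ Rz := by
    intro t ht
    have hbnd : ∀ t' ∈ Ico a b, ‖g t' (z t')‖ ≤ K * ‖z t'‖ + K := by
      intro t' ht'
      have h := hg_growth t' (Ico_subset_Icc_self ht') (z t')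
      have h2 : K * (1 + ‖z t'‖) = K * ‖z t'‖ + K := by ring
      linarith
    have h1 := norm_le_gronwallBound_of_norm_deriv_right_le
      (f' := fun t => g t (z t)) hz_cont hz' (le_of_eq (by rw [hza])) hbnd t ht
    have h2 := gb_le hK (norm_nonneg ξ) hK.le (sub_nonneg.mpr ht.1)
    have h3 : (‖ξ‖ + K * (t - a)) * Real.exp (K * (t - a)) ≤ Rz := by
      rw [hRzdef]
      have ht1 : t - a ≤ b - a := by linarith [ht.2]
      have hexp : Real.exp (K * (t - a)) ≤ Real.exp (K * (b - a)) :=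
        Real.exp_le_exp.mpr (mul_le_mul_of_nonneg_left ht1 hK.le)
      have hta : 0 ≤ t - a := sub_nonneg.mpr ht.1
      have hm1 := mul_le_mul_of_nonneg_left ht1 hK.le
      apply mul_le_mul (by linarith only [hm1]) hexp (Real.exp_pos _).le (by positivity)
    linarith
  -- constants
  obtain ⟨R, hRdef⟩ : ∃ x : ℝ, x = Real.exp (K * (b - a)) * (1 + ‖ξ‖) := ⟨_, rfl⟩
  have hR1 : 1 ≤ R := by
    rw [hRdef]
    have t1 : (1:ℝ) ≤ Real.exp (K * (b - a)) :=
      Real.one_le_exp (by positivity : (0:ℝ) ≤ K * (b - a))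
    have h1 : (1:ℝ) * 1 ≤ Real.exp (K * (b - a)) * (1 + ‖ξ‖) :=
      mul_le_mul t1 (by linarith [norm_nonneg ξ]) zero_le_one (by positivity)
    linarith only [h1]
  have hR0 : 0 ≤ R := by linarith
  obtain ⟨M, hMdef⟩ : ∃ x : ℝ, x = K * R := ⟨_, rfl⟩
  have hM0 : 0 ≤ M := by rw [hMdef]; positivity
  set R' : ℝ := R + M * (b - a) with hR'def
  have hRR' : R ≤ R' := by
    rw [hR'def]; linarith only [mul_nonneg hM0 hba.le]
  have hR'0 : 0 ≤ R' := by linarith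
  obtain ⟨ρ, hρdef⟩ : ∃ x : ℝ, x = R' + Rz := ⟨_, rfl⟩
  have hR'ρ : R' ≤ ρ := by rw [hρdef]; linarith
  have hRzρ : Rz ≤ ρ := by rw [hρdef]; linarith
  obtain ⟨U, hUdef⟩ : ∃ x : Set (EuclideanSpace ℝ (Fin d)), x = Metric.closedBall 0 ρ := ⟨_, rfl⟩
  have hUc : IsCompact U := by rw [hUdef]; exact isCompact_closedBall _ _
  obtain ⟨H, hH⟩ := hg_osl U hUc
  obtain ⟨L, hL0, hL⟩ := hg_holder U hUc
  obtain ⟨Kp, hKpdef⟩ : ∃ x : ℝ, x = 2 * |H| + 1 := ⟨_, rfl⟩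
  have hKp : 0 < Kp := by rw [hKpdef]; positivity
  obtain ⟨A, hAdef⟩ : ∃ x : ℝ, x = (b - a) * Real.exp (Kp * (b - a)) := ⟨_, rfl⟩
  have hA0 : 0 ≤ A := by rw [hAdef]; positivity
  refine ⟨L * (1 + M) * Real.sqrt A, by positivity, ?_⟩
  intro n hn y hy0 hrec
  obtain ⟨h, hhdef⟩ : ∃ x : ℝ, x = (b - a) / n := ⟨_, rfl⟩
  rw [← hhdef] at hrec ⊢
  have hn1 : (1:ℝ) ≤ n := by exact_mod_cast hn
  have hh0 : 0 < h := by rw [hhdef]; positivity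
  have hnh : (n:ℝ) * h = b - a := by rw [hhdef]; field_simp
  have hhba : h ≤ b - a := by
    have t := mul_le_mul_of_nonneg_left hn1 hh0.le
    linarith only [t, hnh]
  -- node times in [a, b]
  have htk_mem : ∀ k : ℕ, k ≤ n → a + k * h ∈ Icc a b := by
    intro k hk
    have hkn : (k:ℝ) ≤ n := by exact_mod_cast hk
    constructor
    · have t := mul_nonneg (Nat.cast_nonneg k : (0:ℝ) ≤ k) hh0.le
      linarith only [t]
    · have t := mul_le_mul_of_nonneg_right hkn hh0.le
      linarith only [t, hnh]
  -- Euler iterates bounds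
  have hy_bd : ∀ k, k ≤ n → 1 + ‖y k‖ ≤ R := by
    have main : ∀ k, k ≤ n → 1 + ‖y k‖ ≤ (1 + h * K) ^ k * (1 + ‖ξ‖) := by
      intro k
      induction k with
      | zero => intro _; simp [hy0]
      | succ k ih =>
        intro hk1
        have hk : k < n := hk1
        have ihk := ih (le_of_lt hk)
        have tmem := htk_mem k (le_of_lt hk)
        have hg1 := hg_growth _ tmem (y k)
        have hstep : ‖y (k + 1)‖ ≤ ‖y k‖ + h * (K * (1 + ‖y k‖)) := by
          rw [hrec k hk]
          calc ‖y k + h • g (a + k * h) (y k)‖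
              ≤ ‖y k‖ + ‖h • g (a + k * h) (y k)‖ := norm_add_le _ _
            _ = ‖y k‖ + |h| * ‖g (a + k * h) (y k)‖ := by rw [norm_smul, Real.norm_eq_abs]
            _ ≤ ‖y k‖ + h * (K * (1 + ‖y k‖)) := by
                rw [abs_of_nonneg hh0.le]
                have := mul_le_mul_of_nonneg_left hg1 hh0.le
                linarith
        have hpos : (0:ℝ) < (1 + h * K) := by positivity
        have h2 : 1 + ‖y (k + 1)‖ ≤ (1 + h * K) * (1 + ‖y k‖) := by
          linarith only [hstep]
        calc 1 + ‖y (k + 1)‖ ≤ (1 + h * K) * (1 + ‖y k‖) := h2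
          _ ≤ (1 + h * K) * ((1 + h * K) ^ k * (1 + ‖ξ‖)) :=
              mul_le_mul_of_nonneg_left ihk hpos.le
          _ = (1 + h * K) ^ (k + 1) * (1 + ‖ξ‖) := by ring
    intro k hk
    have h1 := main k hk
    have h2 : (1 + h * K) ^ k ≤ Real.exp (K * (b - a)) := by
      have e1 : (1 + h * K) ≤ Real.exp (h * K) := by
        linarith [Real.add_one_le_exp (h * K)]
      have e2 : (1 + h * K) ^ k ≤ (Real.exp (h * K)) ^ k :=
        pow_le_pow_left₀ (by positivity) e1 k
      rw [← Real.exp_nat_mul] at e2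
      refine e2.trans (Real.exp_le_exp.mpr ?_)
      have hkn : (k:ℝ) ≤ n := by exact_mod_cast hk
      have hm : (k:ℝ) * (h * K) ≤ (n:ℝ) * (h * K) :=
        mul_le_mul_of_nonneg_right hkn (by positivity)
      have t2 : (n:ℝ) * (h * K) = K * (b - a) := by rw [← hnh]; ring
      linarith only [hm, t2]
    have h3 := mul_le_mul_of_nonneg_right h2 (by positivity : (0:ℝ) ≤ 1 + ‖ξ‖)
    rw [hRdef]
    linarith
  -- δ for this n
  obtain ⟨δ, hδdef⟩ : ∃ x : ℝ, x = L * (h ^ α + (1 + M) * h ^ β) := ⟨_, rfl⟩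
  have hrpα : (0:ℝ) ≤ h ^ α := Real.rpow_nonneg hh0.le α
  have hrpβ : (0:ℝ) ≤ h ^ β := Real.rpow_nonneg hh0.le β
  have hδ0 : 0 ≤ δ := by
    rw [hδdef]
    have h1 := mul_nonneg (by linarith : (0:ℝ) ≤ 1 + M) hrpβ
    have h2 : (0:ℝ) ≤ h ^ α + (1 + M) * h ^ β := by linarith
    exact mul_nonneg hL0.le h2
  -- key per-interval estimate
  have key : ∀ k : ℕ, k < n → ∀ t ∈ Icc (a + k * h) (a + ((k:ℝ) + 1) * h),
      ‖z t - (y k + (t - (a + k * h)) • g (a + k * h) (y k))‖ ^ 2 ≤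
        (‖z (a + k * h) - y k‖ ^ 2 + δ ^ 2 * h) * Real.exp (Kp * h) := by
    intro k hk
    obtain ⟨c, hcdef⟩ : ∃ x : ℝ, x = a + k * h := ⟨_, rfl⟩
    obtain ⟨e, hedef⟩ : ∃ x : ℝ, x = a + ((k:ℝ) + 1) * h := ⟨_, rfl⟩
    rw [← hcdef, ← hedef]
    have hec : e = c + h := by rw [hcdef, hedef]; ring
    have hce : c < e := by rw [hec]; linarith
    have hcab : c ∈ Icc a b := by rw [hcdef]; exact htk_mem k (le_of_lt hk)
    have heab : e ∈ Icc a b := by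
      rw [hedef]
      have := htk_mem (k + 1) hk
      convert this using 2
      push_cast; ring
    have hsub : Icc c e ⊆ Icc a b := Icc_subset_Icc hcab.1 heab.2
    have hIco : Ico c e ⊆ Ico a b := fun x hx => ⟨le_trans hcab.1 hx.1, lt_of_lt_of_le hx.2 heab.2⟩
    have hykR : 1 + ‖y k‖ ≤ R := hy_bd k (le_of_lt hk)
    have hykU : y k ∈ U := by
      rw [hUdef, Metric.mem_closedBall, dist_zero_right]
      linarith
    have hgk_bd : ‖g c (y k)‖ ≤ M := by
      have h1 := hg_growth c hcab (y k)
      have h2 : K * (1 + ‖y k‖) ≤ K * R := mul_le_mul_of_nonneg_left hykR hK.le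
      rw [hMdef]
      linarith
    have hbound : ∀ t ∈ Ico c e,
        2 * ⟪z t - (y k + (t - c) • g c (y k)), g t (z t) - g c (y k)⟫ ≤
          Kp * ‖z t - (y k + (t - c) • g c (y k))‖ ^ 2 + δ ^ 2 := by
      intro t ht
      have htab : t ∈ Icc a b := Ico_subset_Icc_self (hIco ht)
      have htc0 : 0 ≤ t - c := sub_nonneg.mpr ht.1
      have htch : t - c ≤ h := by
        have := ht.2
        rw [hec] at this
        linarith
      obtain ⟨l, hldef⟩ : ∃ x : EuclideanSpace ℝ (Fin d), x = y k + (t - c) • g c (y k) := ⟨_, rfl⟩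
      rw [← hldef]
      have hsmul : ‖(t - c) • g c (y k)‖ = (t - c) * ‖g c (y k)‖ := by
        rw [norm_smul, Real.norm_eq_abs, abs_of_nonneg htc0]
      have hl_norm : ‖l‖ ≤ R' := by
        rw [hldef, hR'def]
        calc ‖y k + (t - c) • g c (y k)‖ ≤ ‖y k‖ + ‖(t - c) • g c (y k)‖ := norm_add_le _ _
          _ ≤ R + M * (b - a) := by
              rw [hsmul]
              have h5 : (t - c) * ‖g c (y k)‖ ≤ h * M :=
                mul_le_mul htch hgk_bd (norm_nonneg _) hh0.le
              have h6 : h * M ≤ (b - a) * M := mul_le_mul_of_nonneg_right hhba hM0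
              linarith
      have hlU : l ∈ U := by
        rw [hUdef, Metric.mem_closedBall, dist_zero_right]; linarith
      have hztU : z t ∈ U := by
        rw [hUdef, Metric.mem_closedBall, dist_zero_right]
        linarith [hz_bd t htab]
      have o1 := hH t htab (z t) hztU l hlU
      have o2 := hL t htab c hcab l hlU (y k) hykU
      have e2 : |t - c| ^ α ≤ h ^ α := by
        apply Real.rpow_le_rpow (abs_nonneg _) _ hα0.le
        rw [abs_of_nonneg htc0]; exact htch
      have e3 : ‖l - y k‖ ≤ h * M := by
        rw [hldef]
        simp only [add_sub_cancel_left]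
        rw [hsmul]
        exact mul_le_mul htch hgk_bd (norm_nonneg _) hh0.le
      have e4 : ‖l - y k‖ ^ β ≤ h ^ β * (1 + M) := by
        calc ‖l - y k‖ ^ β ≤ (h * M) ^ β :=
              Real.rpow_le_rpow (norm_nonneg _) e3 hβ0.le
          _ = h ^ β * M ^ β := Real.mul_rpow hh0.le hM0
          _ ≤ h ^ β * (1 + M) :=
              mul_le_mul_of_nonneg_left (rpow_le_one_add hM0 hβ0.le hβ1) hrpβ
      have e7 : ‖g t l - g c (y k)‖ ≤ δ := by
        refine o2.trans ?_
        rw [hδdef]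
        have t := add_le_add e2 e4
        exact mul_le_mul_of_nonneg_left (by linarith only [t]) hL0.le
      have hsplit : g t (z t) - g c (y k) = (g t (z t) - g t l) + (g t l - g c (y k)) := by
        abel
      have i1 : ⟪z t - l, g t (z t) - g c (y k)⟫ =
          ⟪z t - l, g t (z t) - g t l⟫ + ⟪z t - l, g t l - g c (y k)⟫ := by
        rw [hsplit, inner_add_right]
      have i2 : ⟪z t - l, g t l - g c (y k)⟫ ≤ ‖z t - l‖ * δ :=
        (real_inner_le_norm _ _).trans (mul_le_mul_of_nonneg_left e7 (norm_nonneg _))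
      have habs : H * ‖z t - l‖ ^ 2 ≤ |H| * ‖z t - l‖ ^ 2 :=
        mul_le_mul_of_nonneg_right (le_abs_self H) (sq_nonneg _)
      rw [hKpdef]
      have key2 : 2 * (‖z t - l‖ * δ) ≤ ‖z t - l‖ ^ 2 + δ ^ 2 := by
        nlinarith only [sq_nonneg (‖z t - l‖ - δ)]
      linarith only [i1, o1, i2, habs, key2]
    have res := interval_err g z c e (y k) (g c (y k)) Kp δ (hz_cont.mono hsub)
      (fun t ht => hz' t (hIco ht)) hbound
    intro t ht
    have h1 := res t ht
    have htc0 : 0 ≤ t - c := sub_nonneg.mpr ht.1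
    have htch : t - c ≤ h := by
      have := ht.2; rw [hec] at this; linarith
    have h2 := gb_le hKp (sq_nonneg (‖z c - y k‖)) (sq_nonneg δ) htc0
    have h3 : (‖z c - y k‖ ^ 2 + δ ^ 2 * (t - c)) * Real.exp (Kp * (t - c)) ≤
        (‖z c - y k‖ ^ 2 + δ ^ 2 * h) * Real.exp (Kp * h) := by
      have hexp : Real.exp (Kp * (t - c)) ≤ Real.exp (Kp * h) :=
        Real.exp_le_exp.mpr (mul_le_mul_of_nonneg_left htch hKp.le)
      apply mul_le_mul _ hexp (Real.exp_pos _).le _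
      · have t := mul_nonneg (sq_nonneg δ) (sub_nonneg.mpr htch)
        linarith only [t]
      · have t := mul_nonneg (sq_nonneg δ) hh0.le
        linarith only [t, sq_nonneg (‖z c - y k‖)]
    linarith
  -- endpoint errors by induction
  have hP1 : 1 ≤ Real.exp (Kp * h) := Real.one_le_exp (by positivity)
  have endpt : ∀ k, k ≤ n → ‖z (a + k * h) - y k‖ ^ 2 ≤
      δ ^ 2 * k * h * (Real.exp (Kp * h)) ^ k := by
    intro k
    induction k with
    | zero => intro _; simp [hy0, hza]
    | succ k ih =>
      intro hk1
      have hk : k < n := hk1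
      have ihk := ih (le_of_lt hk)
      have tmem : (a + ((k:ℝ) + 1) * h) ∈ Icc (a + k * h) (a + ((k:ℝ) + 1) * h) := by
        constructor
        · linarith only [hh0.le]
        · exact le_refl _
      have h1 := key k hk _ tmem
      have hth : (a + ((k:ℝ) + 1) * h) - (a + k * h) = h := by ring
      rw [hth] at h1
      have hy1 : y k + h • g (a + k * h) (y k) = y (k + 1) := (hrec k hk).symm
      rw [hy1] at h1
      have hPk : (1:ℝ) ≤ (Real.exp (Kp * h)) ^ k := by
        rw [← Real.exp_nat_mul]
        exact Real.one_le_exp (by positivity)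
      have hPpos : (0:ℝ) < Real.exp (Kp * h) := Real.exp_pos _
      have step1 : (‖z (a + k * h) - y k‖ ^ 2 + δ ^ 2 * h) * Real.exp (Kp * h) ≤
          (δ ^ 2 * k * h * (Real.exp (Kp * h)) ^ k + δ ^ 2 * h) * Real.exp (Kp * h) :=
        mul_le_mul_of_nonneg_right (by linarith) hPpos.le
      have step2 : (δ ^ 2 * k * h * (Real.exp (Kp * h)) ^ k + δ ^ 2 * h) * Real.exp (Kp * h) ≤
          δ ^ 2 * ((k:ℝ) + 1) * h * (Real.exp (Kp * h)) ^ (k + 1) := by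
        rw [pow_succ (Real.exp (Kp * h)) k]
        have aux : 0 ≤ δ ^ 2 * h * Real.exp (Kp * h) * ((Real.exp (Kp * h)) ^ k - 1) :=
          mul_nonneg (mul_nonneg (mul_nonneg (sq_nonneg δ) hh0.le) hPpos.le)
            (sub_nonneg.mpr hPk)
        linarith only [aux]
      push_cast
      calc ‖z (a + ((k:ℝ) + 1) * h) - y (k + 1)‖ ^ 2
          ≤ (‖z (a + k * h) - y k‖ ^ 2 + δ ^ 2 * h) * Real.exp (Kp * h) := h1
        _ ≤ (δ ^ 2 * k * h * (Real.exp (Kp * h)) ^ k + δ ^ 2 * h) * Real.exp (Kp * h) := step1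
        _ ≤ δ ^ 2 * ((k:ℝ) + 1) * h * (Real.exp (Kp * h)) ^ (k + 1) := step2
  -- conclusion
  intro k hk t htmem
  have h1 := key k hk t htmem
  have h2 := endpt k (le_of_lt hk)
  have hPpos : (0:ℝ) < Real.exp (Kp * h) := Real.exp_pos _
  have hPk : (1:ℝ) ≤ (Real.exp (Kp * h)) ^ k := by
    rw [← Real.exp_nat_mul]
    exact Real.one_le_exp (by positivity)
  have hk1n : (k:ℝ) + 1 ≤ n := by exact_mod_cast hk
  have hbd : (‖z (a + k * h) - y k‖ ^ 2 + δ ^ 2 * h) * Real.exp (Kp * h) ≤ δ ^ 2 * A := by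
    have step1 : (‖z (a + k * h) - y k‖ ^ 2 + δ ^ 2 * h) * Real.exp (Kp * h) ≤
        (δ ^ 2 * k * h * (Real.exp (Kp * h)) ^ k + δ ^ 2 * h) * Real.exp (Kp * h) :=
      mul_le_mul_of_nonneg_right (by linarith) hPpos.le
    have step2 : (δ ^ 2 * k * h * (Real.exp (Kp * h)) ^ k + δ ^ 2 * h) * Real.exp (Kp * h) ≤
        δ ^ 2 * ((k:ℝ) + 1) * h * (Real.exp (Kp * h)) ^ (k + 1) := by
      rw [pow_succ (Real.exp (Kp * h)) k]
      have aux : 0 ≤ δ ^ 2 * h * Real.exp (Kp * h) * ((Real.exp (Kp * h)) ^ k - 1) :=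
        mul_nonneg (mul_nonneg (mul_nonneg (sq_nonneg δ) hh0.le) hPpos.le)
          (sub_nonneg.mpr hPk)
      linarith only [aux]
    have step3 : δ ^ 2 * ((k:ℝ) + 1) * h * (Real.exp (Kp * h)) ^ (k + 1) ≤ δ ^ 2 * A := by
      rw [hAdef]
      have e1 : (Real.exp (Kp * h)) ^ (k + 1) = Real.exp (((k:ℝ) + 1) * (Kp * h)) := by
        rw [← Real.exp_nat_mul]
        push_cast
        ring_nf
      have ekh : ((k:ℝ) + 1) * h ≤ b - a := by
        have t := mul_le_mul_of_nonneg_right hk1n hh0.le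
        linarith only [t, hnh]
      have e2 : Real.exp (((k:ℝ) + 1) * (Kp * h)) ≤ Real.exp (Kp * (b - a)) := by
        apply Real.exp_le_exp.mpr
        have t1 := mul_le_mul_of_nonneg_right hk1n (mul_nonneg hKp.le hh0.le)
        have t2 : (n:ℝ) * (Kp * h) = Kp * (b - a) := by rw [← hnh]; ring
        linarith only [t1, t2]
      rw [e1]
      calc δ ^ 2 * ((k:ℝ) + 1) * h * Real.exp (((k:ℝ) + 1) * (Kp * h))
          ≤ δ ^ 2 * ((k:ℝ) + 1) * h * Real.exp (Kp * (b - a)) := by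
            apply mul_le_mul_of_nonneg_left e2
            have t := mul_nonneg (mul_nonneg (sq_nonneg δ)
              (by positivity : (0:ℝ) ≤ (k:ℝ) + 1)) hh0.le
            linarith only [t]
        _ ≤ δ ^ 2 * ((b - a) * Real.exp (Kp * (b - a))) := by
            have t := mul_nonneg (mul_nonneg (sq_nonneg δ)
              (Real.exp_pos (Kp * (b - a))).le) (sub_nonneg.mpr ekh)
            linarith only [t]
    linarith
  have h3 : ‖z t - (y k + (t - (a + k * h)) • g (a + k * h) (y k))‖ ^ 2 ≤ δ ^ 2 * A :=
    le_trans h1 hbd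
  have h4 : ‖z t - (y k + (t - (a + k * h)) • g (a + k * h) (y k))‖ ≤ δ * Real.sqrt A := by
    calc ‖z t - (y k + (t - (a + k * h)) • g (a + k * h) (y k))‖
        = Real.sqrt (‖z t - (y k + (t - (a + k * h)) • g (a + k * h) (y k))‖ ^ 2) :=
          (Real.sqrt_sq (norm_nonneg _)).symm
      _ ≤ Real.sqrt (δ ^ 2 * A) := Real.sqrt_le_sqrt h3
      _ = δ * Real.sqrt A := by
          rw [Real.sqrt_mul (sq_nonneg δ), Real.sqrt_sq hδ0]
  have h5 : δ ≤ L * (1 + M) * (h ^ α + h ^ β) := by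
    rw [hδdef]
    have t := mul_nonneg (mul_nonneg hL0.le hM0) hrpα
    linarith only [t]
  have hQ : 0 ≤ L * (1 + M) * Real.sqrt A * (h ^ α + h ^ β) := by
    apply mul_nonneg
    apply mul_nonneg
    apply mul_nonneg hL0.le (by linarith)
    exact Real.sqrt_nonneg A
    linarith
  calc ‖z t - (y k + (t - (a + k * h)) • g (a + k * h) (y k))‖
      ≤ δ * Real.sqrt A := h4
    _ ≤ (L * (1 + M) * (h ^ α + h ^ β)) * Real.sqrt A :=
        mul_le_mul_of_nonneg_right h5 (Real.sqrt_nonneg A)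
    _ ≤ L * (1 + M) * Real.sqrt A * (1 + ‖ξ‖) * (h ^ α + h ^ β) := by
        have t := mul_nonneg hQ (norm_nonneg ξ)
        linarith only [t]
end

section
/- Let g satisfy (G1)–(G4) with β = 1 (local Lipschitz in the state variable). Consider perturbed Euler iterates ỹ₀ = ξ̃ with ‖ξ̃ − ξ‖ ≤ δ and ỹ_{k+1} = ỹ_k + h(g(t_k, ỹ_k) + δ_g(t_k, ỹ_k)), where δ_g is Borel measurable with ‖δ_g(t,y)‖ ≤ δ(1+‖y‖), δ ∈ [0,1]. Then there is a constant C (independent of n, δ, δ_g, ξ̃) such that max_{0 ≤ k ≤ n} ‖y_k − ỹ_k‖ ≤ C(1+‖ξ‖) δ for all n with h = (b−a)/n < 1/2, where y_k are the exact Euler iterates. -/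
open Set

set_option maxHeartbeats 1000000

/-- Stability of the Euler iterates under noisy information in the locally
Lipschitz case (β = 1). -/
theorem euler_stmt_6
    (a b : ℝ) (hab : a < b) (d : ℕ) (hd : 0 < d) (K : ℝ) (hK : 0 < K)
    (α : ℝ) (hα : α ∈ Ioc (0:ℝ) 1)
    (ξ : EuclideanSpace ℝ (Fin d))
    (g : ℝ → EuclideanSpace ℝ (Fin d) → EuclideanSpace ℝ (Fin d))
    (hg_cont : ContinuousOn (fun p : ℝ × EuclideanSpace ℝ (Fin d) => g p.1 p.2)
      (Icc a b ×ˢ univ))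
    (hg_growth : ∀ t ∈ Icc a b, ∀ y, ‖g t y‖ ≤ K * (1 + ‖y‖))
    (hg_osl : ∀ U : Set (EuclideanSpace ℝ (Fin d)), IsCompact U →
      ∃ H : ℝ, ∀ t ∈ Icc a b, ∀ y₁ ∈ U, ∀ y₂ ∈ U,
        (inner ℝ (y₁ - y₂) (g t y₁ - g t y₂) : ℝ) ≤ H * ‖y₁ - y₂‖ ^ 2)
    (hg_lip : ∀ U : Set (EuclideanSpace ℝ (Fin d)), IsCompact U →
      ∃ L : ℝ, 0 < L ∧ ∀ t₁ ∈ Icc a b, ∀ t₂ ∈ Icc a b, ∀ y₁ ∈ U, ∀ y₂ ∈ U,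
        ‖g t₁ y₁ - g t₂ y₂‖ ≤ L * (|t₁ - t₂| ^ α + ‖y₁ - y₂‖)) :
    ∃ C : ℝ, 0 ≤ C ∧ ∀ n : ℕ, 0 < n → (b - a) / n < 1 / 2 →
      ∀ δ : ℝ, δ ∈ Icc (0:ℝ) 1 →
      ∀ δg : ℝ → EuclideanSpace ℝ (Fin d) → EuclideanSpace ℝ (Fin d),
        Measurable (Function.uncurry δg) →
        (∀ t ∈ Icc a b, ∀ y, ‖δg t y‖ ≤ δ * (1 + ‖y‖)) →
      ∀ ξt : EuclideanSpace ℝ (Fin d), ‖ξt - ξ‖ ≤ δ →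
      ∀ y yt : ℕ → EuclideanSpace ℝ (Fin d),
        y 0 = ξ →
        (∀ k < n, y (k + 1) = y k + ((b - a) / n) • g (a + k * ((b - a) / n)) (y k)) →
        yt 0 = ξt →
        (∀ k < n, yt (k + 1) = yt k + ((b - a) / n) •
          (g (a + k * ((b - a) / n)) (yt k) + δg (a + k * ((b - a) / n)) (yt k))) →
      ∀ k ≤ n, ‖y k - yt k‖ ≤ C * (1 + ‖ξ‖) * δ := by
  obtain ⟨hα0, hα1⟩ := hα
  have hba : 0 < b - a := sub_pos.mpr hab
  set R : ℝ := Real.exp ((K+1)*(b-a)) * (2+‖ξ‖) with hRdef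
  have hR0 : 0 < R := by positivity
  obtain ⟨L, hL0, hL⟩ := hg_lip (Metric.closedBall 0 R) (isCompact_closedBall _ _)
  refine ⟨Real.exp (L*(b-a)) * (1 + (b-a)*R), by positivity, ?_⟩
  intro n hn _ δ hδ δg _ hδgb ξt hξt y yt hy0 hy hyt0 hyt
  obtain ⟨hδ0, hδ1⟩ := hδ
  set h : ℝ := (b-a)/n with hhdef
  have hn' : (0:ℝ) < n := by exact_mod_cast hn
  have hh : 0 < h := div_pos hba hn'
  have hnh : (n:ℝ) * h = b - a := by rw [hhdef]; field_simp
  have ht : ∀ k < n, a + k * h ∈ Icc a b := by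
    intro k hk
    have hk' : (k:ℝ) ≤ n := by exact_mod_cast hk.le
    constructor
    · nlinarith [hh.le, Nat.cast_nonneg (α := ℝ) k]
    · nlinarith
  -- bound on exact iterates
  have hyb : ∀ k ≤ n, 1 + ‖y k‖ ≤ (1 + h*K)^k * (1 + ‖ξ‖) := by
    intro k hk
    induction k with
    | zero => simp [hy0]
    | succ k ih =>
      have hkn : k < n := hk
      have ihk := ih hkn.le
      have hg1 : ‖g (a + k*h) (y k)‖ ≤ K * (1 + ‖y k‖) := hg_growth _ (ht k hkn) _
      have hstep : ‖y (k+1)‖ ≤ ‖y k‖ + h * (K * (1 + ‖y k‖)) := by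
        rw [hy k hkn]
        calc ‖y k + h • g (a+↑k*h) (y k)‖ ≤ ‖y k‖ + ‖h • g (a+↑k*h) (y k)‖ := norm_add_le _ _
        _ = ‖y k‖ + h * ‖g (a+↑k*h) (y k)‖ := by
              rw [norm_smul, Real.norm_eq_abs, abs_of_pos hh]
        _ ≤ ‖y k‖ + h * (K * (1 + ‖y k‖)) := by gcongr
      have h1 : 1 + ‖y (k+1)‖ ≤ (1 + h*K) * (1 + ‖y k‖) := by nlinarith
      have h2 : (1 + h*K) * (1 + ‖y k‖) ≤ (1 + h*K) * ((1+h*K)^k * (1+‖ξ‖)) := by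
        apply mul_le_mul_of_nonneg_left ihk; positivity
      calc 1 + ‖y (k+1)‖ ≤ (1 + h*K) * ((1+h*K)^k * (1+‖ξ‖)) := h1.trans h2
      _ = (1+h*K)^(k+1) * (1+‖ξ‖) := by ring
  -- bound on perturbed iterates
  have hytb : ∀ k ≤ n, 1 + ‖yt k‖ ≤ (1 + h*(K+1))^k * (2 + ‖ξ‖) := by
    intro k hk
    induction k with
    | zero =>
      have : ‖ξt‖ ≤ ‖ξ‖ + 1 := by
        have := norm_sub_norm_le ξt ξ
        linarith
      simp only [hyt0, pow_zero, one_mul]; linarith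
    | succ k ih =>
      have hkn : k < n := hk
      have ihk := ih hkn.le
      have hg1 : ‖g (a + k*h) (yt k)‖ ≤ K * (1 + ‖yt k‖) := hg_growth _ (ht k hkn) _
      have hg2 : ‖δg (a + k*h) (yt k)‖ ≤ δ * (1 + ‖yt k‖) := hδgb _ (ht k hkn) _
      have hstep : ‖yt (k+1)‖ ≤ ‖yt k‖ + h * ((K+1) * (1 + ‖yt k‖)) := by
        rw [hyt k hkn]
        calc ‖yt k + h • (g (a+↑k*h) (yt k) + δg (a+↑k*h) (yt k))‖
            ≤ ‖yt k‖ + ‖h • (g (a+↑k*h) (yt k) + δg (a+↑k*h) (yt k))‖ := norm_add_le _ _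
        _ = ‖yt k‖ + h * ‖g (a+↑k*h) (yt k) + δg (a+↑k*h) (yt k)‖ := by
              rw [norm_smul, Real.norm_eq_abs, abs_of_pos hh]
        _ ≤ ‖yt k‖ + h * (‖g (a+↑k*h) (yt k)‖ + ‖δg (a+↑k*h) (yt k)‖) := by
              gcongr
              exact norm_add_le _ _
        _ ≤ _ := by
              have hd : δ * (1 + ‖yt k‖) ≤ 1 * (1 + ‖yt k‖) := by
                apply mul_le_mul_of_nonneg_right hδ1; positivity
              gcongr
              linarith
      have h1 : 1 + ‖yt (k+1)‖ ≤ (1 + h*(K+1)) * (1 + ‖yt k‖) := by nlinarith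
      have h2 : (1 + h*(K+1)) * (1 + ‖yt k‖) ≤ (1 + h*(K+1)) * ((1+h*(K+1))^k * (2+‖ξ‖)) := by
        apply mul_le_mul_of_nonneg_left ihk; positivity
      calc 1 + ‖yt (k+1)‖ ≤ (1 + h*(K+1)) * ((1+h*(K+1))^k * (2+‖ξ‖)) := h1.trans h2
      _ = (1+h*(K+1))^(k+1) * (2+‖ξ‖) := by ring
  -- exponential bound tool
  have hexp : ∀ (c : ℝ), 0 ≤ c → ∀ k ≤ n, (1 + h*c)^k ≤ Real.exp (c*(b-a)) := by
    intro c hc k hk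
    have h1 : 1 + h*c ≤ Real.exp (h*c) := by
      have := Real.add_one_le_exp (h*c); linarith
    have h2 : (1 + h*c)^k ≤ (Real.exp (h*c))^k := by
      apply pow_le_pow_left₀ (by positivity) h1
    have h3 : (Real.exp (h*c))^k = Real.exp (k*(h*c)) := (Real.exp_nat_mul _ k).symm
    have h4 : (k:ℝ)*(h*c) ≤ c*(b-a) := by
      have hk' : (k:ℝ) ≤ n := by exact_mod_cast hk
      nlinarith [mul_nonneg (mul_nonneg (sub_nonneg.mpr hk') hh.le) hc]
    calc (1 + h*c)^k ≤ (Real.exp (h*c))^k := h2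
    _ = Real.exp (k*(h*c)) := h3
    _ ≤ Real.exp (c*(b-a)) := Real.exp_le_exp.mpr h4
  -- membership in the ball
  have hymem : ∀ k ≤ n, y k ∈ Metric.closedBall (0 : EuclideanSpace ℝ (Fin d)) R := by
    intro k hk
    rw [Metric.mem_closedBall, dist_zero_right]
    have h1 := hyb k hk
    have h2 : (1 + h*K)^k * (1 + ‖ξ‖) ≤ Real.exp (K*(b-a)) * (1+‖ξ‖) := by
      apply mul_le_mul_of_nonneg_right (hexp K hK.le k hk); positivity
    have h3 : Real.exp (K*(b-a)) * (1+‖ξ‖) ≤ R := by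
      rw [hRdef]
      have e1 : Real.exp (K*(b-a)) ≤ Real.exp ((K+1)*(b-a)) := by
        apply Real.exp_le_exp.mpr; nlinarith
      nlinarith [Real.exp_pos (K*(b-a)), norm_nonneg ξ]
    linarith
  have hytmem : ∀ k ≤ n, yt k ∈ Metric.closedBall (0 : EuclideanSpace ℝ (Fin d)) R := by
    intro k hk
    rw [Metric.mem_closedBall, dist_zero_right]
    have h1 := hytb k hk
    have h2 : (1 + h*(K+1))^k * (2 + ‖ξ‖) ≤ Real.exp ((K+1)*(b-a)) * (2+‖ξ‖) := by
      apply mul_le_mul_of_nonneg_right (hexp (K+1) (by linarith) k hk); positivity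
    linarith
  have hytR : ∀ k ≤ n, 1 + ‖yt k‖ ≤ R := by
    intro k hk
    have h1 := hytb k hk
    have h2 : (1 + h*(K+1))^k * (2 + ‖ξ‖) ≤ Real.exp ((K+1)*(b-a)) * (2+‖ξ‖) := by
      apply mul_le_mul_of_nonneg_right (hexp (K+1) (by linarith) k hk); positivity
    linarith
  -- main induction
  have main : ∀ k ≤ n, ‖y k - yt k‖ ≤ (1 + h*L)^k * (δ + k*h*δ*R) := by
    intro k hk
    induction k with
    | zero =>
      simp only [hy0, hyt0, pow_zero, one_mul, Nat.cast_zero]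
      rw [norm_sub_rev]
      linarith
    | succ k ih =>
      have hkn : k < n := hk
      have ihk := ih hkn.le
      have htk := ht k hkn
      have hlip : ‖g (a+↑k*h) (y k) - g (a+↑k*h) (yt k)‖ ≤ L * ‖y k - yt k‖ := by
        have := hL _ htk _ htk _ (hymem k hkn.le) _ (hytmem k hkn.le)
        rwa [sub_self, abs_zero, Real.zero_rpow hα0.ne', zero_add] at this
      have hdg : ‖δg (a+↑k*h) (yt k)‖ ≤ δ * R := by
        have h1 := hδgb _ htk (yt k)
        have h2 := hytR k hkn.le
        nlinarith [mul_le_mul_of_nonneg_left h2 hδ0]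
      have hid : y (k+1) - yt (k+1) = (y k - yt k) +
          h • ((g (a+↑k*h) (y k) - g (a+↑k*h) (yt k)) - δg (a+↑k*h) (yt k)) := by
        rw [hy k hkn, hyt k hkn]; module
      have hstep : ‖y (k+1) - yt (k+1)‖ ≤ (1 + h*L) * ‖y k - yt k‖ + h * (δ * R) := by
        rw [hid]
        calc ‖(y k - yt k) + h • ((g (a+↑k*h) (y k) - g (a+↑k*h) (yt k)) - δg (a+↑k*h) (yt k))‖
            ≤ ‖y k - yt k‖ + ‖h • ((g (a+↑k*h) (y k) - g (a+↑k*h) (yt k)) - δg (a+↑k*h) (yt k))‖ :=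
              norm_add_le _ _
        _ = ‖y k - yt k‖ + h * ‖(g (a+↑k*h) (y k) - g (a+↑k*h) (yt k)) - δg (a+↑k*h) (yt k)‖ := by
              rw [norm_smul, Real.norm_eq_abs, abs_of_pos hh]
        _ ≤ ‖y k - yt k‖ + h * (‖g (a+↑k*h) (y k) - g (a+↑k*h) (yt k)‖ + ‖δg (a+↑k*h) (yt k)‖) := by
              gcongr
              exact norm_sub_le _ _
        _ ≤ _ := by
              linarith [mul_le_mul_of_nonneg_left (add_le_add hlip hdg) hh.le]
      have hone : (1:ℝ) ≤ (1 + h*L)^(k+1) := by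
        have h1 : (1:ℝ) ≤ 1 + h*L := by nlinarith
        calc (1:ℝ) = 1^(k+1) := (one_pow _).symm
        _ ≤ (1 + h*L)^(k+1) := pow_le_pow_left₀ zero_le_one h1 _
      calc ‖y (k+1) - yt (k+1)‖ ≤ (1 + h*L) * ‖y k - yt k‖ + h * (δ * R) := hstep
      _ ≤ (1 + h*L) * ((1 + h*L)^k * (δ + k*h*δ*R)) + h * (δ * R) := by
            apply add_le_add_left; apply mul_le_mul_of_nonneg_left ihk; positivity
      _ ≤ (1 + h*L)^(k+1) * (δ + k*h*δ*R) + (1 + h*L)^(k+1) * (h*δ*R) := by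
            have h6 : h * (δ * R) ≤ (1 + h*L)^(k+1) * (h*δ*R) := by
              have := mul_le_mul_of_nonneg_right hone (show (0:ℝ) ≤ h*δ*R by positivity)
              rw [one_mul] at this
              linarith [this]
            have h7 : (1 + h*L) * ((1 + h*L)^k * (δ + k*h*δ*R)) =
                (1 + h*L)^(k+1) * (δ + k*h*δ*R) := by ring
            linarith
      _ = (1 + h*L)^(k+1) * (δ + (↑(k+1))*h*δ*R) := by push_cast; ring
  -- conclude
  intro k hk
  have h1 := main k hk
  have h2 : (1 + h*L)^k ≤ Real.exp (L*(b-a)) := hexp L hL0.le k hk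
  have h3 : δ + k*h*δ*R ≤ δ * (1 + (b-a)*R) := by
    have hk' : (k:ℝ) ≤ n := by exact_mod_cast hk
    have hkh : (k:ℝ)*h ≤ b - a := by nlinarith [mul_nonneg (sub_nonneg.mpr hk') hh.le]
    nlinarith [mul_le_mul_of_nonneg_right hkh (mul_nonneg hδ0 hR0.le)]
  have h4 : (1 + h*L)^k * (δ + k*h*δ*R) ≤ Real.exp (L*(b-a)) * (δ * (1 + (b-a)*R)) := by
    have hd0 : 0 ≤ δ + k*h*δ*R := by positivity
    exact mul_le_mul h2 h3 hd0 (Real.exp_pos _).le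
  have h5 : Real.exp (L*(b-a)) * (δ * (1 + (b-a)*R)) ≤
      Real.exp (L*(b-a)) * (1 + (b-a)*R) * (1 + ‖ξ‖) * δ := by
    nlinarith [norm_nonneg ξ,
      mul_nonneg (mul_nonneg (Real.exp_pos (L*(b-a))).le
        (show (0:ℝ) ≤ 1+(b-a)*R by positivity)) hδ0]
  linarith
end

section
/- Euler error bound under noisy information with β ∈ (0,1): under assumptions (G1)–(G4) with Hölder exponent β ∈ (0,1) in the state variable, there exists C̄₂ ∈ [0,∞) such that for all n ≥ ⌈2(b−a)⌉+1, δ ∈ [0,1], ξ̃ with ‖ξ̃ − ξ‖ ≤ δ, and all Borel measurable corruptions δ_g with ‖δ_g(t,y)‖ ≤ δ(1+‖y‖): sup_{a ≤ t ≤ b} ‖z(t) − l̃_n(t)‖ ≤ C̄₂ (1+‖ξ‖)(h^α + h^β + 𝟙_{(0,1]}(δ)·(h^{1/2} + δ)), where l̃_n is the piecewise linear interpolant of the perturbed Euler iterates and h = (b−a)/n. -/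
open Set

lemma euler8_exp_aux (s : ℝ) : Real.exp s - 1 ≤ s * Real.exp s := by
  have h1 : (-s) + 1 ≤ Real.exp (-s) := Real.add_one_le_exp (-s)
  have h2 : Real.exp (-s) * Real.exp s = 1 := by
    rw [← Real.exp_add]; simp
  have h3 : (0:ℝ) < Real.exp s := Real.exp_pos s
  have h4 : ((-s) + 1) * Real.exp s ≤ Real.exp (-s) * Real.exp s :=
    mul_le_mul_of_nonneg_right h1 h3.le
  rw [h2] at h4
  nlinarith

lemma euler8_gronwallBound_le {δ c ε x hh : ℝ} (hδ : 0 ≤ δ) (hc : 0 < c) (hε : 0 ≤ ε)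
    (hx : 0 ≤ x) (hxh : x ≤ hh) :
    gronwallBound δ c ε x ≤ (δ + ε * hh) * Real.exp (c * hh) := by
  rw [gronwallBound_of_K_ne_0 hc.ne']
  have h1 : Real.exp (c * x) ≤ Real.exp (c * hh) :=
    Real.exp_le_exp.2 (mul_le_mul_of_nonneg_left hxh hc.le)
  have h2 : Real.exp (c * x) - 1 ≤ c * x * Real.exp (c * x) := euler8_exp_aux (c * x)
  have h3 : ε / c * (Real.exp (c * x) - 1) ≤ ε / c * (c * x * Real.exp (c * x)) :=
    mul_le_mul_of_nonneg_left h2 (by positivity)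
  have h4 : ε / c * (c * x * Real.exp (c * x)) = ε * x * Real.exp (c * x) := by
    field_simp
  have h5 : ε * x * Real.exp (c * x) ≤ ε * hh * Real.exp (c * hh) :=
    mul_le_mul (mul_le_mul_of_nonneg_left hxh hε) h1 (Real.exp_pos _).le
      (mul_nonneg hε (hx.trans hxh))
  have h6 : δ * Real.exp (c * x) ≤ δ * Real.exp (c * hh) :=
    mul_le_mul_of_nonneg_left h1 hδ
  nlinarith

set_option maxHeartbeats 4000000 in
/-- Error bound for the Euler scheme under noisy information, Hölder case
β ∈ (0,1). -/
theorem euler_stmt_8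
    (a b : ℝ) (hab : a < b) (d : ℕ) (hd : 0 < d) (K : ℝ) (hK : 0 < K)
    (α β : ℝ) (hα : α ∈ Ioc (0:ℝ) 1) (hβ : β ∈ Ioo (0:ℝ) 1)
    (ξ : EuclideanSpace ℝ (Fin d))
    (g : ℝ → EuclideanSpace ℝ (Fin d) → EuclideanSpace ℝ (Fin d))
    (hg_cont : ContinuousOn (fun p : ℝ × EuclideanSpace ℝ (Fin d) => g p.1 p.2)
      (Icc a b ×ˢ univ))
    (hg_growth : ∀ t ∈ Icc a b, ∀ y, ‖g t y‖ ≤ K * (1 + ‖y‖))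
    (hg_osl : ∀ U : Set (EuclideanSpace ℝ (Fin d)), IsCompact U →
      ∃ H : ℝ, ∀ t ∈ Icc a b, ∀ y₁ ∈ U, ∀ y₂ ∈ U,
        (inner ℝ (y₁ - y₂) (g t y₁ - g t y₂) : ℝ) ≤ H * ‖y₁ - y₂‖ ^ 2)
    (hg_holder : ∀ U : Set (EuclideanSpace ℝ (Fin d)), IsCompact U →
      ∃ L : ℝ, 0 < L ∧ ∀ t₁ ∈ Icc a b, ∀ t₂ ∈ Icc a b, ∀ y₁ ∈ U, ∀ y₂ ∈ U,
        ‖g t₁ y₁ - g t₂ y₂‖ ≤ L * (|t₁ - t₂| ^ α + ‖y₁ - y₂‖ ^ β))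
    (z : ℝ → EuclideanSpace ℝ (Fin d))
    (hz : ∀ t ∈ Icc a b, HasDerivWithinAt z (g t (z t)) (Icc a b) t)
    (hza : z a = ξ) :
    ∃ C : ℝ, 0 ≤ C ∧ ∀ n : ℕ, n ≥ ⌈2 * (b - a)⌉₊ + 1 →
      ∀ δ : ℝ, δ ∈ Icc (0:ℝ) 1 →
      ∀ ξt : EuclideanSpace ℝ (Fin d), ‖ξt - ξ‖ ≤ δ →
      ∀ δg : ℝ → EuclideanSpace ℝ (Fin d) → EuclideanSpace ℝ (Fin d),
        Measurable (Function.uncurry δg) →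
        (∀ t ∈ Icc a b, ∀ y, ‖δg t y‖ ≤ δ * (1 + ‖y‖)) →
      ∀ yt : ℕ → EuclideanSpace ℝ (Fin d),
        yt 0 = ξt →
        (∀ k < n, yt (k + 1) = yt k + ((b - a) / n) •
          (g (a + k * ((b - a) / n)) (yt k) + δg (a + k * ((b - a) / n)) (yt k))) →
      ∀ k < n, ∀ t ∈ Icc (a + k * ((b - a) / n)) (a + (k + 1) * ((b - a) / n)),
        ‖z t - (yt k + (t - (a + k * ((b - a) / n))) •
            (g (a + k * ((b - a) / n)) (yt k) + δg (a + k * ((b - a) / n)) (yt k)))‖ ≤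
          C * (1 + ‖ξ‖) * (((b - a) / n) ^ α + ((b - a) / n) ^ β +
            Set.indicator (Ioc (0:ℝ) 1) (fun _ => (1:ℝ)) δ *
              (((b - a) / n) ^ ((1:ℝ)/2) + δ)) := by
  have hT : 0 < b - a := sub_pos.2 hab
  set T := b - a with hTdef
  -- upgrading the derivative of `z` to right derivatives
  have hmemIci : ∀ x ∈ Ico a b, Icc a b ∈ nhdsWithin x (Ici x) := by
    intro x hx
    have h1 : Ici x ∩ Iio b ∈ nhdsWithin x (Ici x) :=
      inter_mem_nhdsWithin _ (Iio_mem_nhds hx.2)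
    exact Filter.mem_of_superset h1 fun y hy => ⟨hx.1.trans hy.1, hy.2.le⟩
  have hz' : ∀ x ∈ Ico a b, HasDerivWithinAt z (g x (z x)) (Ici x) x := fun x hx =>
    (hz x ⟨hx.1, hx.2.le⟩).mono_of_mem_nhdsWithin (hmemIci x hx)
  have hzc : ContinuousOn z (Icc a b) := fun x hx => (hz x hx).continuousWithinAt
  -- a priori bound on z
  set Rz := (‖ξ‖ + K * T) * Real.exp (K * T) with hRzdef
  have hzb : ∀ t ∈ Icc a b, ‖z t‖ ≤ Rz := by
    intro t ht
    have hb1 := norm_le_gronwallBound_of_norm_deriv_right_le hzc hz'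
      (le_of_eq (by rw [hza])) (fun x hx => by
        have h2 := hg_growth x ⟨hx.1, hx.2.le⟩ (z x)
        calc ‖g x (z x)‖ ≤ K * (1 + ‖z x‖) := h2
          _ = K * ‖z x‖ + K := by ring) t ht
    exact hb1.trans (euler8_gronwallBound_le (norm_nonneg _) hK hK.le
      (by linarith [ht.1]) (by have := ht.2; simp only [hTdef]; linarith))
  have hRz0 : 0 ≤ Rz := by positivity
  set Ry := (2 + ‖ξ‖) * Real.exp ((K + 1) * T) with hRydef
  have hexpKT : (1:ℝ) ≤ Real.exp ((K + 1) * T) := Real.one_le_exp (by positivity)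
  have hRy2 : 2 ≤ Ry := by nlinarith [norm_nonneg ξ]
  have hRy0 : (0:ℝ) ≤ Ry := by linarith
  set RU := Rz + (K + 2) * Ry with hRUdef
  have hRU0 : 0 ≤ RU := by positivity
  obtain ⟨H, hH⟩ := hg_osl (Metric.closedBall 0 RU) (isCompact_closedBall 0 RU)
  obtain ⟨L, hL0, hL⟩ := hg_holder (Metric.closedBall 0 RU) (isCompact_closedBall 0 RU)
  set c := 2 * |H| + 1 with hcdef
  have hc0 : 0 < c := by positivity
  set D := L * (1 + ((K + 1) * Ry) ^ β) with hDdef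
  have hKRy0 : 0 ≤ ((K + 1) * Ry) ^ β := Real.rpow_nonneg (by positivity) β
  have hD0 : 0 ≤ D := mul_nonneg hL0.le (by linarith)
  set M := Real.sqrt (1 + T) * Real.exp (c * T / 2) with hMdef
  have hM0 : 0 ≤ M := by positivity
  refine ⟨M * (D + 1 + Ry), by positivity, ?_⟩
  intro n hn δ hδ ξt hξt δg hmeas hδgb yt hy0 hyrec
  obtain ⟨hδ0, hδ1⟩ := hδ
  have hn1 : 1 ≤ n := le_trans (Nat.succ_le_succ (Nat.zero_le _)) hn
  have hn0 : (0:ℝ) < n := by exact_mod_cast hn1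
  have hTn : T ≤ (n:ℝ) := by
    have h1 : (2 * T) ≤ (⌈2 * T⌉₊ : ℝ) := Nat.le_ceil _
    have h2 : ((⌈2 * T⌉₊ + 1 : ℕ) : ℝ) ≤ n := by exact_mod_cast hn
    push_cast at h2
    linarith only [h1, h2, hT]
  set h := T / (n:ℝ) with hhdef
  have hh0 : 0 < h := div_pos hT hn0
  have hh1 : h ≤ 1 := by rw [hhdef, div_le_one hn0]; linarith only [hTn, hT]
  have hnh : (n:ℝ) * h = T := by rw [hhdef]; field_simp
  have hpa : 0 ≤ h ^ α := Real.rpow_nonneg hh0.le α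
  have hpb : 0 ≤ h ^ β := Real.rpow_nonneg hh0.le β
  set ε := D * (h ^ α + h ^ β) + Ry * δ with hεdef
  have hεnn : 0 ≤ ε :=
    add_nonneg (mul_nonneg hD0 (by linarith only [hpa, hpb])) (mul_nonneg hRy0 hδ0)
  have htkmem : ∀ j : ℕ, j ≤ n → a + (j:ℝ) * h ∈ Icc a b := by
    intro j hj
    constructor
    · linarith only [mul_nonneg (Nat.cast_nonneg (α := ℝ) j) hh0.le]
    · have hjr : (j:ℝ) ≤ n := Nat.cast_le.2 hj
      have : (j:ℝ) * h ≤ (n:ℝ) * h := mul_le_mul_of_nonneg_right hjr hh0.le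
      rw [hnh] at this
      simp only [hTdef] at this
      linarith only [this]
  -- a priori bound on the Euler iterates
  have hyb : ∀ j, j ≤ n → 1 + ‖yt j‖ ≤ Ry := by
    have keyy : ∀ j, j ≤ n → 1 + ‖yt j‖ ≤ (2 + ‖ξ‖) * (1 + (K + 1) * h) ^ j := by
      intro j
      induction j with
      | zero =>
        intro _
        have h1 : ‖ξt‖ ≤ ‖ξ‖ + δ := by
          have h2 := norm_sub_norm_le ξt ξ
          linarith only [hξt, h2]
        simp only [hy0, pow_zero, mul_one]
        linarith only [h1, hδ1]
      | succ j ih =>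
        intro hj
        have hjn : j < n := Nat.lt_of_succ_le hj
        have ihj := ih hjn.le
        have htkj := htkmem j hjn.le
        have hgb := hg_growth _ htkj (yt j)
        have hdb := hδgb _ htkj (yt j)
        have hyn0 := norm_nonneg (yt j)
        have hwn : ‖g (a + (j:ℝ) * h) (yt j) + δg (a + (j:ℝ) * h) (yt j)‖ ≤
            (K + 1) * (1 + ‖yt j‖) := by
          calc ‖g (a + (j:ℝ) * h) (yt j) + δg (a + (j:ℝ) * h) (yt j)‖
              ≤ ‖g (a + (j:ℝ) * h) (yt j)‖ + ‖δg (a + (j:ℝ) * h) (yt j)‖ := norm_add_le _ _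
            _ ≤ K * (1 + ‖yt j‖) + δ * (1 + ‖yt j‖) := add_le_add hgb hdb
            _ ≤ (K + 1) * (1 + ‖yt j‖) := by
                have hy1 : (0:ℝ) ≤ 1 + ‖yt j‖ := by linarith only [hyn0]
                linarith only [mul_nonneg (sub_nonneg.2 hδ1) hy1]
        have hstep : ‖yt (j + 1)‖ ≤ ‖yt j‖ + h * ((K + 1) * (1 + ‖yt j‖)) := by
          rw [hyrec j hjn]
          calc ‖yt j + h • (g (a + (j:ℝ) * h) (yt j) + δg (a + (j:ℝ) * h) (yt j))‖
              ≤ ‖yt j‖ + ‖h • (g (a + (j:ℝ) * h) (yt j) + δg (a + (j:ℝ) * h) (yt j))‖ :=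
                norm_add_le _ _
            _ = ‖yt j‖ + h * ‖g (a + (j:ℝ) * h) (yt j) + δg (a + (j:ℝ) * h) (yt j)‖ := by
                rw [norm_smul, Real.norm_eq_abs, abs_of_pos hh0]
            _ ≤ ‖yt j‖ + h * ((K + 1) * (1 + ‖yt j‖)) := by
                have := mul_le_mul_of_nonneg_left hwn hh0.le
                linarith only [this]
        have hpw0 : (0:ℝ) ≤ 1 + (K + 1) * h := by positivity
        calc 1 + ‖yt (j + 1)‖ ≤ (1 + (K + 1) * h) * (1 + ‖yt j‖) := by
              linarith only [hstep]
          _ ≤ (1 + (K + 1) * h) * ((2 + ‖ξ‖) * (1 + (K + 1) * h) ^ j) :=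
              mul_le_mul_of_nonneg_left ihj hpw0
          _ = (2 + ‖ξ‖) * (1 + (K + 1) * h) ^ (j + 1) := by ring
    intro j hj
    refine (keyy j hj).trans ?_
    have h1 : (1 + (K + 1) * h) ^ j ≤ (Real.exp ((K + 1) * h)) ^ j :=
      pow_le_pow_left₀ (by positivity)
        (by linarith only [Real.add_one_le_exp ((K + 1) * h)]) j
    have h2 : (Real.exp ((K + 1) * h)) ^ j = Real.exp ((j:ℝ) * ((K + 1) * h)) :=
      (Real.exp_nat_mul _ j).symm
    have h3 : (j:ℝ) * ((K + 1) * h) ≤ (K + 1) * T := by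
      have hjr : (j:ℝ) ≤ n := Nat.cast_le.2 hj
      have h4 : (j:ℝ) * h ≤ (n:ℝ) * h := mul_le_mul_of_nonneg_right hjr hh0.le
      rw [hnh] at h4
      linarith only [mul_le_mul_of_nonneg_left h4 (by positivity : (0:ℝ) ≤ K + 1)]
    have h5 : (1 + (K + 1) * h) ^ j ≤ Real.exp ((K + 1) * T) := by
      rw [h2] at h1
      exact h1.trans (Real.exp_le_exp.2 h3)
    rw [hRydef]
    exact mul_le_mul_of_nonneg_left h5 (by positivity)
  -- the bound propagated along the grid
  set B : ℕ → ℝ := fun j => (δ ^ 2 + ε ^ 2 * h * j) * Real.exp (c * h * j) with hBdef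
  have hB0 : ∀ j : ℕ, 0 ≤ B j := fun j =>
    mul_nonneg (by positivity) (Real.exp_pos _).le
  have key : ∀ j : ℕ, j < n → ‖z (a + (j:ℝ) * h) - yt j‖ ^ 2 ≤ B j →
      ∀ t ∈ Icc (a + (j:ℝ) * h) (a + ((j:ℝ) + 1) * h),
        ‖z t - (yt j + (t - (a + (j:ℝ) * h)) •
          (g (a + (j:ℝ) * h) (yt j) + δg (a + (j:ℝ) * h) (yt j)))‖ ^ 2 ≤ B (j + 1) := by
    intro j hjn hQ
    set s0 := a + (j:ℝ) * h with hs0def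
    set s1 := a + ((j:ℝ) + 1) * h with hs1def
    have hs10 : s1 - s0 = h := by rw [hs0def, hs1def]; ring
    have hs01 : s0 ≤ s1 := by rw [hs0def, hs1def]; linarith only [hh0]
    have hs0ab : s0 ∈ Icc a b := htkmem j hjn.le
    have hs1ab : s1 ∈ Icc a b := by
      have := htkmem (j + 1) hjn
      rwa [Nat.cast_add, Nat.cast_one] at this
    have hsubab : Icc s0 s1 ⊆ Icc a b := Icc_subset_Icc hs0ab.1 hs1ab.2
    set w := g s0 (yt j) + δg s0 (yt j) with hwdef
    have hyRy : 1 + ‖yt j‖ ≤ Ry := hyb j hjn.le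
    have hyn0 := norm_nonneg (yt j)
    have hwn : ‖w‖ ≤ (K + 1) * Ry := by
      have hgb := hg_growth _ hs0ab (yt j)
      have hdb := hδgb _ hs0ab (yt j)
      calc ‖w‖ ≤ ‖g s0 (yt j)‖ + ‖δg s0 (yt j)‖ := norm_add_le _ _
        _ ≤ K * (1 + ‖yt j‖) + δ * (1 + ‖yt j‖) := add_le_add hgb hdb
        _ ≤ (K + 1) * (1 + ‖yt j‖) := by
            have hy1 : (0:ℝ) ≤ 1 + ‖yt j‖ := by linarith only [hyn0]
            linarith only [mul_nonneg (sub_nonneg.2 hδ1) hy1]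
        _ ≤ (K + 1) * Ry := mul_le_mul_of_nonneg_left hyRy (by positivity)
    set l : ℝ → EuclideanSpace ℝ (Fin d) := fun t => yt j + (t - s0) • w with hldef
    have hlcont : Continuous l := by
      apply continuous_const.add
      exact (continuous_id.sub continuous_const).smul continuous_const
    have hly : ∀ x ∈ Icc s0 s1, ‖l x - yt j‖ ≤ h * ((K + 1) * Ry) := by
      intro x hx
      have hld : l x - yt j = (x - s0) • w := by
        show yt j + (x - s0) • w - yt j = (x - s0) • w
        abel
      rw [hld, norm_smul, Real.norm_eq_abs, abs_of_nonneg (by linarith only [hx.1])]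
      have hxs : x - s0 ≤ h := by
        have := hx.2
        linarith only [this, hs10]
      exact mul_le_mul hxs hwn (norm_nonneg w) hh0.le
    have hyU : yt j ∈ Metric.closedBall (0 : EuclideanSpace ℝ (Fin d)) RU := by
      rw [mem_closedBall_zero_iff]
      have : (0:ℝ) ≤ (K + 1) * Ry := by positivity
      rw [hRUdef]; linarith only [this, hyRy, hRz0, hRy0]
    have hlU : ∀ x ∈ Icc s0 s1, l x ∈ Metric.closedBall (0 : EuclideanSpace ℝ (Fin d)) RU := by
      intro x hx
      rw [mem_closedBall_zero_iff]
      have h1 := hly x hx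
      have h2 : ‖l x‖ ≤ ‖yt j‖ + ‖l x - yt j‖ := by
        simpa using norm_add_le (yt j) (l x - yt j)
      have hKRy : (0:ℝ) ≤ (K + 1) * Ry := by positivity
      have h3 : h * ((K + 1) * Ry) ≤ (K + 1) * Ry := by
        linarith only [mul_nonneg (sub_nonneg.2 hh1) hKRy]
      rw [hRUdef]
      linarith only [h1, h2, h3, hyRy, hRz0]
    have hzU : ∀ x ∈ Icc s0 s1, z x ∈ Metric.closedBall (0 : EuclideanSpace ℝ (Fin d)) RU := by
      intro x hx
      rw [mem_closedBall_zero_iff]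
      have h1 := hzb x (hsubab hx)
      have : (0:ℝ) ≤ (K + 2) * Ry := by positivity
      rw [hRUdef]; linarith only [this, h1]
    set f : ℝ → EuclideanSpace ℝ (Fin d) := fun t => z t - l t with hfdef
    set u : ℝ → ℝ := fun t => (inner ℝ (f t) (f t) : ℝ) with hudef
    have hueq : ∀ x, u x = ‖f x‖ ^ 2 := fun x => real_inner_self_eq_norm_sq (f x)
    have hucont : ContinuousOn u (Icc s0 s1) :=
      ContinuousOn.inner ((hzc.mono hsubab).sub hlcont.continuousOn)
        ((hzc.mono hsubab).sub hlcont.continuousOn)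
    set F : ℝ → EuclideanSpace ℝ (Fin d) := fun x => g x (z x) - w with hFdef
    have hfd : ∀ x ∈ Ico s0 s1, HasDerivWithinAt f (F x) (Ici x) x := by
      intro x hx
      have hxab : x ∈ Ico a b := ⟨hs0ab.1.trans hx.1, lt_of_lt_of_le hx.2 hs1ab.2⟩
      have h1 := hz' x hxab
      have h2 : HasDerivWithinAt l w (Ici x) x := by
        have h3 : HasDerivAt l w x := by
          have h4 := ((hasDerivAt_id x).sub_const s0).smul_const w
          rw [one_smul] at h4
          exact h4.const_add (yt j)
        exact h3.hasDerivWithinAt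
      exact h1.sub h2
    have hud : ∀ x ∈ Ico s0 s1, HasDerivWithinAt u
        ((inner ℝ (f x) (F x) : ℝ) + (inner ℝ (F x) (f x) : ℝ)) (Ici x) x :=
      fun x hx => HasDerivWithinAt.inner ℝ (hfd x hx) (hfd x hx)
    have hbound : ∀ x ∈ Ico s0 s1,
        (inner ℝ (f x) (F x) : ℝ) + (inner ℝ (F x) (f x) : ℝ) ≤ c * u x + ε ^ 2 := by
      intro x hx
      have hxIcc : x ∈ Icc s0 s1 := ⟨hx.1, hx.2.le⟩
      have hxab : x ∈ Icc a b := hsubab hxIcc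
      have hsplit : F x = (g x (z x) - g x (l x)) + (g x (l x) - w) := by
        show g x (z x) - w = (g x (z x) - g x (l x)) + (g x (l x) - w)
        abel
      have hosl : (inner ℝ (f x) (g x (z x) - g x (l x)) : ℝ) ≤ |H| * ‖f x‖ ^ 2 := by
        have h1 := hH x hxab (z x) (hzU x hxIcc) (l x) (hlU x hxIcc)
        have h2 : H * ‖z x - l x‖ ^ 2 ≤ |H| * ‖z x - l x‖ ^ 2 :=
          mul_le_mul_of_nonneg_right (le_abs_self H) (sq_nonneg _)
        exact le_trans h1 h2
      have hrest : ‖g x (l x) - w‖ ≤ ε := by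
        have h1 : ‖g x (l x) - w‖ ≤ ‖g x (l x) - g s0 (yt j)‖ + ‖δg s0 (yt j)‖ := by
          have he : g x (l x) - w = (g x (l x) - g s0 (yt j)) + (-(δg s0 (yt j))) := by
            rw [hwdef]; abel
          rw [he]
          exact (norm_add_le _ _).trans (by rw [norm_neg])
        have h2 := hL x hxab s0 hs0ab (l x) (hlU x hxIcc) (yt j) hyU
        have h3 : |x - s0| ^ α ≤ h ^ α := by
          apply Real.rpow_le_rpow (abs_nonneg _) _ hα.1.le
          rw [abs_of_nonneg (by linarith only [hx.1])]
          linarith only [hx.2.le, hs10]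
        have h4 : ‖l x - yt j‖ ^ β ≤ ((K + 1) * Ry) ^ β * h ^ β := by
          refine le_trans (Real.rpow_le_rpow (norm_nonneg _) (hly x hxIcc) hβ.1.le) ?_
          rw [Real.mul_rpow hh0.le (by positivity)]
          ring_nf
          exact le_refl _
        have h5 : ‖δg s0 (yt j)‖ ≤ δ * Ry := by
          refine (hδgb s0 hs0ab (yt j)).trans ?_
          exact mul_le_mul_of_nonneg_left hyRy hδ0
        have h6 : ‖g x (l x) - g s0 (yt j)‖ ≤ L * (h ^ α + ((K + 1) * Ry) ^ β * h ^ β) :=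
          h2.trans (mul_le_mul_of_nonneg_left (add_le_add h3 h4) hL0.le)
        have h7 : L * (h ^ α + ((K + 1) * Ry) ^ β * h ^ β) + δ * Ry ≤ ε := by
          have h8 : h ^ α + ((K + 1) * Ry) ^ β * h ^ β ≤
              (1 + ((K + 1) * Ry) ^ β) * (h ^ α + h ^ β) := by
            linarith only [mul_nonneg hKRy0 hpa, mul_nonneg hKRy0 hpb, hpa, hpb]
          have h9 := mul_le_mul_of_nonneg_left h8 hL0.le
          have h10 : L * ((1 + ((K + 1) * Ry) ^ β) * (h ^ α + h ^ β)) =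
              L * (1 + ((K + 1) * Ry) ^ β) * (h ^ α + h ^ β) := (mul_assoc _ _ _).symm
          rw [hεdef, hDdef]
          linarith only [h9, h10, mul_nonneg hRy0 hδ0]
        linarith only [h1, h6, h5, h7]
      have hcs : (inner ℝ (f x) (g x (l x) - w) : ℝ) ≤ ‖f x‖ * ε :=
        le_trans (real_inner_le_norm _ _)
          (mul_le_mul_of_nonneg_left hrest (norm_nonneg _))
      have hcomm : (inner ℝ (F x) (f x) : ℝ) = (inner ℝ (f x) (F x) : ℝ) := real_inner_comm _ _
      have hiadd : (inner ℝ (f x) (F x) : ℝ) =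
          (inner ℝ (f x) (g x (z x) - g x (l x)) : ℝ) + (inner ℝ (f x) (g x (l x) - w) : ℝ) := by
        rw [hsplit, inner_add_right]
      have h2ab : 2 * (‖f x‖ * ε) ≤ ‖f x‖ ^ 2 + ε ^ 2 := by
        have := two_mul_le_add_sq (‖f x‖) ε
        linarith only [this]
      rw [hcomm, hiadd, hueq x]
      rw [hcdef]
      linarith only [hosl, hcs, h2ab]
    have hinit : u s0 ≤ B j := by
      have hls0 : l s0 = yt j := by rw [hldef]; simp
      have : u s0 = ‖z s0 - yt j‖ ^ 2 := by rw [hueq s0, hfdef]; simp only [hls0]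
      rw [this]
      exact hQ
    have hgron := le_gronwallBound_of_liminf_deriv_right_le hucont
      (fun x hx r hr => (hud x hx).liminf_right_slope_le hr) hinit hbound
    intro t ht
    have hut : u t ≤ gronwallBound (B j) c (ε ^ 2) (t - s0) := hgron t ht
    have hub : u t ≤ (B j + ε ^ 2 * h) * Real.exp (c * h) := by
      refine hut.trans (euler8_gronwallBound_le (hB0 j) hc0 (sq_nonneg ε)
        (by linarith only [ht.1]) ?_)
      linarith only [ht.2, hs10]
    have hstep : (B j + ε ^ 2 * h) * Real.exp (c * h) ≤ B (j + 1) := by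
      have hBj1 : B (j + 1) = (δ ^ 2 + ε ^ 2 * h * ((j:ℝ) + 1)) *
          Real.exp (c * h * ((j:ℝ) + 1)) := by
        rw [hBdef]; push_cast; ring_nf
      have hee : Real.exp (c * h * ((j:ℝ) + 1)) = Real.exp (c * h * j) * Real.exp (c * h) := by
        rw [← Real.exp_add]; ring_nf
      have he1 : 1 ≤ Real.exp (c * h * j) :=
        Real.one_le_exp (by positivity)
      have he2 : (0:ℝ) < Real.exp (c * h) := Real.exp_pos _
      have hBj : B j = (δ ^ 2 + ε ^ 2 * h * j) * Real.exp (c * h * j) := rfl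
      rw [hBj1, hee, hBj]
      have hnn : (0:ℝ) ≤ ε ^ 2 * h := mul_nonneg (sq_nonneg ε) hh0.le
      have h11 : ε ^ 2 * h * Real.exp (c * h) ≤
          ε ^ 2 * h * (Real.exp (c * h * j) * Real.exp (c * h)) :=
        mul_le_mul_of_nonneg_left (le_mul_of_one_le_left he2.le he1) hnn
      have h12 : (δ ^ 2 + ε ^ 2 * h * ((j:ℝ) + 1)) * (Real.exp (c * h * j) * Real.exp (c * h))
          = (δ ^ 2 + ε ^ 2 * h * (j:ℝ)) * Real.exp (c * h * j) * Real.exp (c * h)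
            + ε ^ 2 * h * (Real.exp (c * h * j) * Real.exp (c * h)) := by ring
      have h13 : ((δ ^ 2 + ε ^ 2 * h * (j:ℝ)) * Real.exp (c * h * j) + ε ^ 2 * h)
          * Real.exp (c * h)
          = (δ ^ 2 + ε ^ 2 * h * (j:ℝ)) * Real.exp (c * h * j) * Real.exp (c * h)
            + ε ^ 2 * h * Real.exp (c * h) := by ring
      rw [h13, h12]
      linarith only [h11]
    have hfinal : u t = ‖z t - (yt j + (t - s0) • w)‖ ^ 2 := by
      rw [hueq t]
    rw [← hfinal]
    exact hub.trans hstep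
  -- propagate the bound along the grid
  have Q : ∀ j, j ≤ n → ‖z (a + (j:ℝ) * h) - yt j‖ ^ 2 ≤ B j := by
    intro j
    induction j with
    | zero =>
      intro _
      have h1 : ‖z (a + (0:ℕ) * h) - yt 0‖ ≤ δ := by
        rw [hy0]
        have : a + ((0:ℕ):ℝ) * h = a := by push_cast; ring
        rw [this, hza, norm_sub_rev]
        exact hξt
      have h2 : B 0 = δ ^ 2 := by
        rw [hBdef]; push_cast; simp
      rw [h2]
      calc ‖z (a + ((0:ℕ):ℝ) * h) - yt 0‖ ^ 2 ≤ δ ^ 2 :=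
        pow_le_pow_left₀ (norm_nonneg _) h1 2
    | succ j ih =>
      intro hj
      have hjn : j < n := Nat.lt_of_succ_le hj
      have hmem : a + ((j:ℝ) + 1) * h ∈ Icc (a + (j:ℝ) * h) (a + ((j:ℝ) + 1) * h) :=
        ⟨by linarith only [hh0], le_refl _⟩
      have hk2 := key j hjn (ih hjn.le) _ hmem
      have hs : (a + ((j:ℝ) + 1) * h) - (a + (j:ℝ) * h) = h := by ring
      rw [hs, ← hyrec j hjn] at hk2
      have hcast : ((j + 1 : ℕ) : ℝ) = (j:ℝ) + 1 := by push_cast; ring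
      rw [hcast]
      exact hk2
  -- conclusion
  intro k hk t ht
  have hfin := key k hk (Q k hk.le) t ht
  have hk1n : (k:ℝ) + 1 ≤ (n:ℝ) := by exact_mod_cast Nat.succ_le_of_lt hk
  have hhk : h * ((k:ℝ) + 1) ≤ T := by
    have h1 : h * ((k:ℝ) + 1) ≤ h * (n:ℝ) := mul_le_mul_of_nonneg_left hk1n hh0.le
    rw [mul_comm h (n:ℝ), hnh] at h1
    exact h1
  have hB1 : B (k + 1) ≤ (δ ^ 2 + ε ^ 2 * T) * Real.exp (c * T) := by
    have hc1 : B (k + 1) = (δ ^ 2 + ε ^ 2 * h * ((k:ℝ) + 1)) *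
        Real.exp (c * h * ((k:ℝ) + 1)) := by
      rw [hBdef]; push_cast; ring_nf
    rw [hc1]
    have h1 : δ ^ 2 + ε ^ 2 * h * ((k:ℝ) + 1) ≤ δ ^ 2 + ε ^ 2 * T := by
      have h2 : ε ^ 2 * (h * ((k:ℝ) + 1)) ≤ ε ^ 2 * T :=
        mul_le_mul_of_nonneg_left hhk (sq_nonneg ε)
      rw [← mul_assoc] at h2
      linarith only [h2]
    have h3 : Real.exp (c * h * ((k:ℝ) + 1)) ≤ Real.exp (c * T) := by
      apply Real.exp_le_exp.2
      rw [mul_assoc]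
      exact mul_le_mul_of_nonneg_left hhk hc0.le
    exact mul_le_mul h1 h3 (Real.exp_pos _).le (by positivity)
  have hG : (δ ^ 2 + ε ^ 2 * T) * Real.exp (c * T) ≤ (M * (δ + ε)) ^ 2 := by
    have h1 : Real.sqrt (1 + T) ^ 2 = 1 + T := Real.sq_sqrt (by linarith only [hT])
    have h2 : Real.exp (c * T / 2) ^ 2 = Real.exp (c * T) := by
      rw [sq, ← Real.exp_add]
      ring_nf
    have h4 : (M * (δ + ε)) ^ 2 = (1 + T) * Real.exp (c * T) * (δ + ε) ^ 2 := by
      rw [hMdef, mul_pow, mul_pow, h1, h2]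
    rw [h4]
    have h3 : δ ^ 2 + ε ^ 2 * T ≤ (δ + ε) ^ 2 * (1 + T) := by
      linarith only [mul_nonneg hδ0 hεnn, sq_nonneg ε,
        mul_nonneg hT.le (mul_nonneg hδ0 hεnn), mul_nonneg hT.le (sq_nonneg δ)]
    calc (δ ^ 2 + ε ^ 2 * T) * Real.exp (c * T)
        ≤ ((δ + ε) ^ 2 * (1 + T)) * Real.exp (c * T) :=
          mul_le_mul_of_nonneg_right h3 (Real.exp_pos _).le
      _ = (1 + T) * Real.exp (c * T) * (δ + ε) ^ 2 := by ring
  have hδε0 : 0 ≤ δ + ε := by linarith only [hδ0, hεnn]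
  have hnorm : ‖z t - (yt k + (t - (a + (k:ℝ) * h)) •
      (g (a + (k:ℝ) * h) (yt k) + δg (a + (k:ℝ) * h) (yt k)))‖ ≤ M * (δ + ε) := by
    have h0 : 0 ≤ M * (δ + ε) := mul_nonneg hM0 hδε0
    have hsq := hfin.trans (hB1.trans hG)
    calc ‖z t - (yt k + (t - (a + (k:ℝ) * h)) •
          (g (a + (k:ℝ) * h) (yt k) + δg (a + (k:ℝ) * h) (yt k)))‖
        = Real.sqrt (‖z t - (yt k + (t - (a + (k:ℝ) * h)) •
          (g (a + (k:ℝ) * h) (yt k) + δg (a + (k:ℝ) * h) (yt k)))‖ ^ 2) :=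
          (Real.sqrt_sq (norm_nonneg _)).symm
      _ ≤ Real.sqrt ((M * (δ + ε)) ^ 2) := Real.sqrt_le_sqrt hsq
      _ = M * (δ + ε) := Real.sqrt_sq h0
  refine hnorm.trans ?_
  have hind0 : 0 ≤ Set.indicator (Ioc (0:ℝ) 1) (fun _ => (1:ℝ)) δ :=
    Set.indicator_nonneg (fun _ _ => zero_le_one) δ
  have hp12 : 0 ≤ h ^ ((1:ℝ)/2) := Real.rpow_nonneg hh0.le _
  have hδle : δ ≤ Set.indicator (Ioc (0:ℝ) 1) (fun _ => (1:ℝ)) δ * (h ^ ((1:ℝ)/2) + δ) := by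
    rcases eq_or_lt_of_le hδ0 with h0 | h0
    · rw [← h0]
      have hnm : (0:ℝ) ∉ Ioc (0:ℝ) 1 := by simp
      rw [Set.indicator_of_notMem hnm]
      simp [hp12]
    · rw [Set.indicator_of_mem (Set.mem_Ioc.mpr ⟨h0, hδ1⟩)]
      have : (1:ℝ) * (h ^ ((1:ℝ)/2) + δ) = h ^ ((1:ℝ)/2) + δ := one_mul _
      linarith only [this.ge, hp12]
  have hξ1 : (1:ℝ) ≤ 1 + ‖ξ‖ := by linarith only [norm_nonneg ξ]
  have hexpand : M * (δ + ε) = M * D * (h ^ α + h ^ β) + M * (1 + Ry) * δ := by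
    rw [hεdef]; ring
  rw [hexpand]
  have hC1 : M * D * (h ^ α + h ^ β) ≤ M * (D + 1 + Ry) * (h ^ α + h ^ β) := by
    apply mul_le_mul_of_nonneg_right _ (by linarith only [hpa, hpb])
    have : (0:ℝ) ≤ M * (1 + Ry) := mul_nonneg hM0 (by linarith only [hRy0])
    linarith only [this]
  have hC2 : M * (1 + Ry) * δ ≤ M * (D + 1 + Ry) *
      (Set.indicator (Ioc (0:ℝ) 1) (fun _ => (1:ℝ)) δ * (h ^ ((1:ℝ)/2) + δ)) := by
    have hMR : 0 ≤ M * (1 + Ry) := mul_nonneg hM0 (by linarith only [hRy0])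
    have hMC : M * (1 + Ry) ≤ M * (D + 1 + Ry) := by
      apply mul_le_mul_of_nonneg_left _ hM0
      linarith only [hD0]
    calc M * (1 + Ry) * δ ≤ M * (1 + Ry) *
          (Set.indicator (Ioc (0:ℝ) 1) (fun _ => (1:ℝ)) δ * (h ^ ((1:ℝ)/2) + δ)) :=
            mul_le_mul_of_nonneg_left hδle hMR
      _ ≤ M * (D + 1 + Ry) *
          (Set.indicator (Ioc (0:ℝ) 1) (fun _ => (1:ℝ)) δ * (h ^ ((1:ℝ)/2) + δ)) := by
            apply mul_le_mul_of_nonneg_right hMC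
            exact mul_nonneg hind0 (by linarith only [hp12, hδ0])
  have hsum : M * D * (h ^ α + h ^ β) + M * (1 + Ry) * δ ≤
      M * (D + 1 + Ry) * (h ^ α + h ^ β +
        Set.indicator (Ioc (0:ℝ) 1) (fun _ => (1:ℝ)) δ * (h ^ ((1:ℝ)/2) + δ)) := by
    have := add_le_add hC1 hC2
    linarith only [this]
  refine hsum.trans ?_
  have hS0 : 0 ≤ h ^ α + h ^ β +
      Set.indicator (Ioc (0:ℝ) 1) (fun _ => (1:ℝ)) δ * (h ^ ((1:ℝ)/2) + δ) := by
    have := mul_nonneg hind0 (by linarith only [hp12, hδ0] : (0:ℝ) ≤ h ^ ((1:ℝ)/2) + δ)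
    linarith only [this, hpa, hpb]
  have hC0 : 0 ≤ M * (D + 1 + Ry) := mul_nonneg hM0 (by linarith only [hD0, hRy0])
  calc M * (D + 1 + Ry) * (h ^ α + h ^ β +
        Set.indicator (Ioc (0:ℝ) 1) (fun _ => (1:ℝ)) δ * (h ^ ((1:ℝ)/2) + δ))
      = M * (D + 1 + Ry) * 1 * (h ^ α + h ^ β +
        Set.indicator (Ioc (0:ℝ) 1) (fun _ => (1:ℝ)) δ * (h ^ ((1:ℝ)/2) + δ)) := by ring
    _ ≤ M * (D + 1 + Ry) * (1 + ‖ξ‖) * (h ^ α + h ^ β +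
        Set.indicator (Ioc (0:ℝ) 1) (fun _ => (1:ℝ)) δ * (h ^ ((1:ℝ)/2) + δ)) := by
        apply mul_le_mul_of_nonneg_right _ hS0
        exact mul_le_mul_of_nonneg_left hξ1 hC0
end

section
/- Squared error recursion for noisy Euler with β ∈ (0,1): let e_k = ỹ_k − y_k denote the difference between perturbed and exact Euler iterates, and suppose on the ball containing all iterates the one-sided Lipschitz constant is H and the state-Hölder constant is L with exponent β ∈ (0,1), and the corruption satisfies ‖δ_g(t_k, ỹ_k)‖ ≤ δ(1+‖ỹ_k‖) with ‖ỹ_k‖ ≤ M. Then for h ∈ (0, 1/2) and each k, ‖e_{k+1}‖² ≤ (1 + K₅ h) ‖e_k‖² + K₄ (1+M)² h (h + δ²), where K₅ = 2 + 3(2H⁺ + L²) and K₄ = 2 max{L², 1+M²}. -/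
set_option maxHeartbeats 2000000 in
/-- One-step squared-error recursion for the noisy Euler scheme, β ∈ (0,1). -/
theorem euler_stmt_9
    (d : ℕ) (hd : 0 < d)
    (β : ℝ) (hβ : β ∈ Set.Ioo (0:ℝ) 1)
    (H L M δ h : ℝ) (hL : 0 < L) (hM : 0 ≤ M) (hδ : 0 ≤ δ)
    (hh0 : 0 < h) (hh : h < 1 / 2)
    (t : ℝ) (y yt e : EuclideanSpace ℝ (Fin d))
    (g : ℝ → EuclideanSpace ℝ (Fin d) → EuclideanSpace ℝ (Fin d))
    (hosl : (inner ℝ (yt - y) (g t yt - g t y) : ℝ) ≤ H * ‖yt - y‖ ^ 2)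
    (hhold : ‖g t yt - g t y‖ ≤ L * ‖yt - y‖ ^ β)
    (hcorr : ‖e‖ ≤ δ * (1 + ‖yt‖))
    (hyt : ‖yt‖ ≤ M) :
    ‖(yt + h • (g t yt + e)) - (y + h • g t y)‖ ^ 2 ≤
      (1 + (2 + 3 * (2 * max H 0 + L ^ 2)) * h) * ‖yt - y‖ ^ 2 +
        2 * max (L ^ 2) (1 + M ^ 2) * (1 + M) ^ 2 * h * (h + δ ^ 2) := by
  obtain ⟨hβ0, hβ1⟩ := hβ
  set u := yt - y with hu
  set v := g t yt - g t y with hv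
  have hvec : (yt + h • (g t yt + e)) - (y + h • g t y) = (u + h • v) + h • e := by
    rw [hu, hv, smul_add, smul_sub]; abel
  rw [hvec]
  set a := u + h • v with ha
  have hA : (0:ℝ) ≤ ‖u‖ ^ 2 := sq_nonneg _
  have hP : (0:ℝ) ≤ max H 0 := le_max_right _ _
  have hQL : L ^ 2 ≤ max (L ^ 2) (1 + M ^ 2) := le_max_left _ _
  have hQM : 1 + M ^ 2 ≤ max (L ^ 2) (1 + M ^ 2) := le_max_right _ _
  -- Step 1: Young on the corruption term
  have key1 : ‖a + h • e‖ ^ 2 ≤ (1 + h) * ‖a‖ ^ 2 + (h + h ^ 2) * ‖e‖ ^ 2 := by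
    have hexp : ‖a + h • e‖ ^ 2
        = ‖a‖ ^ 2 + 2 * inner ℝ a (h • e) + ‖h • e‖ ^ 2 := norm_add_sq_real a (h • e)
    have hns : ‖h • e‖ = h * ‖e‖ := by
      rw [norm_smul, Real.norm_eq_abs, abs_of_pos hh0]
    have hip : (inner ℝ a (h • e) : ℝ) ≤ ‖a‖ * (h * ‖e‖) := by
      calc (inner ℝ a (h • e) : ℝ) ≤ ‖a‖ * ‖h • e‖ := real_inner_le_norm _ _
        _ = ‖a‖ * (h * ‖e‖) := by rw [hns]
    rw [hexp, hns]
    linarith [mul_nonneg hh0.le (sq_nonneg (‖a‖ - ‖e‖)), hip]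
  -- Hölder-power estimate
  have hpow : (‖u‖ ^ β) ^ 2 ≤ 1 + ‖u‖ ^ 2 := by
    rcases le_or_gt ‖u‖ 1 with hle | hgt
    · have h1 : ‖u‖ ^ β ≤ 1 := Real.rpow_le_one (norm_nonneg u) hle hβ0.le
      nlinarith [Real.rpow_nonneg (norm_nonneg u) β]
    · have h1 : (‖u‖ ^ β) ^ 2 = ‖u‖ ^ (β * 2) := by
        rw [← Real.rpow_natCast (‖u‖ ^ β) 2, ← Real.rpow_mul (norm_nonneg u)]
        norm_num
      have h2 : ‖u‖ ^ (β * 2) ≤ ‖u‖ ^ ((2:ℕ):ℝ) :=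
        Real.rpow_le_rpow_of_exponent_le hgt.le (by push_cast; linarith)
      rw [Real.rpow_natCast] at h2
      rw [h1]
      linarith
  have hv2 : ‖v‖ ^ 2 ≤ L ^ 2 * (1 + ‖u‖ ^ 2) := by
    have h1 : ‖v‖ ^ 2 ≤ (L * ‖u‖ ^ β) ^ 2 := by
      apply sq_le_sq' _ hhold
      have := norm_nonneg v
      nlinarith [mul_nonneg hL.le (Real.rpow_nonneg (norm_nonneg u) β)]
    calc ‖v‖ ^ 2 ≤ (L * ‖u‖ ^ β) ^ 2 := h1
      _ = L ^ 2 * (‖u‖ ^ β) ^ 2 := by ring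
      _ ≤ L ^ 2 * (1 + ‖u‖ ^ 2) := by nlinarith [sq_nonneg L]
  -- Step 2: bound ‖a‖²
  have key2 : ‖a‖ ^ 2 ≤ (1 + 2 * h * max H 0 + h ^ 2 * L ^ 2) * ‖u‖ ^ 2 + h ^ 2 * L ^ 2 := by
    have hexp : ‖a‖ ^ 2 = ‖u‖ ^ 2 + 2 * inner ℝ u (h • v) + ‖h • v‖ ^ 2 :=
      norm_add_sq_real u (h • v)
    have hip : (inner ℝ u (h • v) : ℝ) = h * inner ℝ u v := real_inner_smul_right u v h
    have hns : ‖h • v‖ ^ 2 = h ^ 2 * ‖v‖ ^ 2 := by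
      rw [norm_smul, Real.norm_eq_abs, mul_pow, sq_abs]
    have hiv : (inner ℝ u v : ℝ) ≤ max H 0 * ‖u‖ ^ 2 := by
      rcases le_or_gt H 0 with h0 | h0
      · calc (inner ℝ u v : ℝ) ≤ H * ‖u‖ ^ 2 := hosl
          _ ≤ max H 0 * ‖u‖ ^ 2 :=
            mul_le_mul_of_nonneg_right (le_max_left H 0) hA
      · calc (inner ℝ u v : ℝ) ≤ H * ‖u‖ ^ 2 := hosl
          _ ≤ max H 0 * ‖u‖ ^ 2 :=
            mul_le_mul_of_nonneg_right (le_max_left H 0) hA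
    rw [hexp, hip, hns]
    linarith [mul_le_mul_of_nonneg_left hv2 (sq_nonneg h),
      mul_le_mul_of_nonneg_left hiv hh0.le]
  -- corruption bound
  have hW : ‖e‖ ^ 2 ≤ δ ^ 2 * (1 + M) ^ 2 := by
    have h1 : ‖e‖ ≤ δ * (1 + M) := le_trans hcorr
      (by nlinarith : δ * (1 + ‖yt‖) ≤ δ * (1 + M))
    calc ‖e‖ ^ 2 ≤ (δ * (1 + M)) ^ 2 := pow_le_pow_left₀ (norm_nonneg e) h1 2
      _ = δ ^ 2 * (1 + M) ^ 2 := by ring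
  -- Assemble
  have h12 : (0:ℝ) ≤ 1/2 - h := by linarith
  have h1m : (0:ℝ) ≤ 1 - h := by linarith
  have hQ0 : (0:ℝ) ≤ max (L ^ 2) (1 + M ^ 2) := le_trans (sq_nonneg L) hQL
  have hM1 : (1:ℝ) ≤ (1 + M) ^ 2 := by nlinarith
  have hQ1 : (1:ℝ) ≤ max (L ^ 2) (1 + M ^ 2) := le_trans (by nlinarith) hQM
  have T1 : (1 + h) * (1 + 2 * h * max H 0 + h ^ 2 * L ^ 2)
      ≤ 1 + (2 + 3 * (2 * max H 0 + L ^ 2)) * h := by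
    linarith [mul_nonneg (mul_nonneg hh0.le h12) (sq_nonneg L),
      mul_nonneg (mul_nonneg hh0.le h12) hP,
      mul_nonneg (mul_nonneg (mul_nonneg hh0.le hh0.le) h12) (sq_nonneg L),
      mul_nonneg hh0.le (sq_nonneg L), mul_nonneg hh0.le hP, hh0.le]
  have T2 : (1 + h) * (h ^ 2 * L ^ 2)
      ≤ 2 * max (L ^ 2) (1 + M ^ 2) * (1 + M) ^ 2 * h * h := by
    linarith [mul_nonneg (mul_nonneg h1m (sq_nonneg h)) (sq_nonneg L),
      mul_nonneg (sq_nonneg h) (sub_nonneg.mpr hQL),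
      mul_nonneg (mul_nonneg (sq_nonneg h) hQ0) (sub_nonneg.mpr hM1),
      mul_nonneg (sq_nonneg h) (sq_nonneg L)]
  have T3 : (h + h ^ 2) * (δ ^ 2 * (1 + M) ^ 2)
      ≤ 2 * max (L ^ 2) (1 + M ^ 2) * (1 + M) ^ 2 * h * δ ^ 2 := by
    have hX0 : (0:ℝ) ≤ δ ^ 2 * (1 + M) ^ 2 := mul_nonneg (sq_nonneg δ) (sq_nonneg (1 + M))
    linarith [mul_nonneg (mul_nonneg h1m hh0.le) hX0,
      mul_nonneg (mul_nonneg hh0.le (sub_nonneg.mpr hQ1)) hX0,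
      mul_nonneg hh0.le hX0]
  have hc1 : (1 + h) * ‖a‖ ^ 2 ≤
      (1 + (2 + 3 * (2 * max H 0 + L ^ 2)) * h) * ‖u‖ ^ 2
        + 2 * max (L ^ 2) (1 + M ^ 2) * (1 + M) ^ 2 * h * h := by
    have e0 := mul_le_mul_of_nonneg_left key2 (by linarith : (0:ℝ) ≤ 1 + h)
    have e2 := mul_le_mul_of_nonneg_right T1 hA
    linarith [e0, e2, T2]
  have hc2 : (h + h ^ 2) * ‖e‖ ^ 2 ≤
      2 * max (L ^ 2) (1 + M ^ 2) * (1 + M) ^ 2 * h * δ ^ 2 := by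
    have e0 := mul_le_mul_of_nonneg_left hW
      (by nlinarith : (0:ℝ) ≤ h + h ^ 2)
    linarith [T3]
  have hrhs : 2 * max (L ^ 2) (1 + M ^ 2) * (1 + M) ^ 2 * h * (h + δ ^ 2)
      = 2 * max (L ^ 2) (1 + M ^ 2) * (1 + M) ^ 2 * h * h
        + 2 * max (L ^ 2) (1 + M ^ 2) * (1 + M) ^ 2 * h * δ ^ 2 := by ring
  rw [hrhs]
  linarith [key1, hc1, hc2]
end

section
/- Let γ : [a,b] → ℝ be α-Hölder continuous with constant L_γ and nonnegative, let f : ℝ → ℝ satisfy 0 ≤ f ≤ D and be L_f-Lipschitz, let h(x) = −sgn(x)|x|^ρ with ρ ∈ (0,1], and define g(t,x) = γ(t) h(x) f(x). Then for all t ∈ [a,b] and all x, y ∈ ℝ, (x−y)(g(t,x) − g(t,y)) ≤ L_f · sup_{s ∈ [a,b]}|γ(s)| · (1+|y|) · |x−y|². In particular g satisfies a local one-sided Lipschitz condition in the state variable. -/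
open Set

lemma sign_rpow_mono (ρ : ℝ) (hρ0 : 0 < ρ) {u v : ℝ} (huv : u ≤ v) :
    Real.sign u * |u| ^ ρ ≤ Real.sign v * |v| ^ ρ := by
  rcases lt_trichotomy u 0 with hu | hu | hu
  · rcases lt_trichotomy v 0 with hv | hv | hv
    · rw [Real.sign_of_neg hu, Real.sign_of_neg hv]
      have h1 : |v| ≤ |u| := by
        rw [abs_of_neg hu, abs_of_neg hv]; linarith
      have := Real.rpow_le_rpow (abs_nonneg v) h1 hρ0.le
      linarith
    · subst hv
      rw [Real.sign_of_neg hu]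
      simp [Real.rpow_natCast]
      positivity
    · rw [Real.sign_of_neg hu, Real.sign_of_pos hv]
      have h1 : (0:ℝ) ≤ |u| ^ ρ := Real.rpow_nonneg (abs_nonneg u) ρ
      have h2 : (0:ℝ) ≤ |v| ^ ρ := Real.rpow_nonneg (abs_nonneg v) ρ
      linarith
  · subst hu
    simp only [Real.sign_zero, zero_mul]
    rcases lt_or_eq_of_le huv with hv | hv
    · rw [Real.sign_of_pos hv]
      have : (0:ℝ) ≤ |v| ^ ρ := Real.rpow_nonneg (abs_nonneg v) ρ
      linarith
    · subst hv; simp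
  · have hv : 0 < v := lt_of_lt_of_le hu huv
    rw [Real.sign_of_pos hu, Real.sign_of_pos hv]
    have h1 : |u| ≤ |v| := by rw [abs_of_pos hu, abs_of_pos hv]; exact huv
    have := Real.rpow_le_rpow (abs_nonneg u) h1 hρ0.le
    linarith

/-- One-sided Lipschitz estimate for the multiplicative example
g(t,x) = γ(t) h(x) f(x) with h(x) = −sgn(x)|x|^ρ. -/
theorem euler_stmt_16
    (a b : ℝ) (hab : a < b) (α ρ : ℝ) (hα : α ∈ Ioc (0:ℝ) 1) (hρ : ρ ∈ Ioc (0:ℝ) 1)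
    (Lγ D Lf : ℝ) (hLγ : 0 ≤ Lγ) (hD : 0 ≤ D) (hLf : 0 ≤ Lf)
    (γ : ℝ → ℝ) (f : ℝ → ℝ)
    (hγ_holder : ∀ t ∈ Icc a b, ∀ s ∈ Icc a b, |γ t - γ s| ≤ Lγ * |t - s| ^ α)
    (hγ_nonneg : ∀ t ∈ Icc a b, 0 ≤ γ t)
    (hf_bdd : ∀ x : ℝ, 0 ≤ f x ∧ f x ≤ D)
    (hf_lip : ∀ x y : ℝ, |f x - f y| ≤ Lf * |x - y|)
    (S : ℝ) (hS : IsLUB ((fun s => |γ s|) '' Icc a b) S) :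
    ∀ t ∈ Icc a b, ∀ x y : ℝ,
      (x - y) * ((γ t * (-(Real.sign x) * |x| ^ ρ) * f x) -
          (γ t * (-(Real.sign y) * |y| ^ ρ) * f y)) ≤
        Lf * S * (1 + |y|) * |x - y| ^ 2 := by
  intro t ht x y
  set hx := -(Real.sign x) * |x| ^ ρ with hhx
  set hy := -(Real.sign y) * |y| ^ ρ with hhy
  have hγt : 0 ≤ γ t := hγ_nonneg t ht
  have hγS : γ t ≤ S := by
    have h := hS.1 ⟨t, ht, rfl⟩
    simpa [abs_of_nonneg hγt] using h
  have hS0 : 0 ≤ S := le_trans hγt hγS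
  -- h is decreasing: (x - y) * (hx - hy) ≤ 0
  have key1 : (x - y) * (hx - hy) ≤ 0 := by
    rcases le_total x y with h | h
    · have h2 := sign_rpow_mono ρ hρ.1 h
      apply mul_nonpos_of_nonpos_of_nonneg
      · linarith
      · simp only [hhx, hhy]; linarith
    · have h2 := sign_rpow_mono ρ hρ.1 h
      apply mul_nonpos_of_nonneg_of_nonpos
      · linarith
      · simp only [hhx, hhy]; linarith
  -- |hy| ≤ 1 + |y|
  have hhy_bd : |hy| ≤ 1 + |y| := by
    have h1 : |hy| = |y| ^ ρ := by
      rw [hhy, abs_mul, abs_neg, abs_of_nonneg (Real.rpow_nonneg (abs_nonneg y) ρ)]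
      rcases lt_trichotomy y 0 with h | h | h
      · rw [Real.sign_of_neg h]; norm_num
      · subst h; simp [Real.zero_rpow (ne_of_gt hρ.1)]
      · rw [Real.sign_of_pos h]; norm_num
    rw [h1]
    rcases le_total (|y|) 1 with h | h
    · have := Real.rpow_le_one (abs_nonneg y) h hρ.1.le
      linarith [abs_nonneg y]
    · have h2 : |y| ^ ρ ≤ |y| ^ (1:ℝ) :=
        Real.rpow_le_rpow_of_exponent_le h hρ.2
      rw [Real.rpow_one] at h2
      linarith
  have hfx0 : 0 ≤ f x := (hf_bdd x).1
  -- decomposition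
  have hdecomp : (x - y) * ((γ t * hx * f x) - (γ t * hy * f y)) =
      γ t * f x * ((x - y) * (hx - hy)) + γ t * hy * ((x - y) * (f x - f y)) := by
    ring
  rw [hdecomp]
  have t1 : γ t * f x * ((x - y) * (hx - hy)) ≤ 0 :=
    mul_nonpos_of_nonneg_of_nonpos (by positivity) key1
  have t2 : γ t * hy * ((x - y) * (f x - f y)) ≤ Lf * S * (1 + |y|) * |x - y| ^ 2 := by
    calc γ t * hy * ((x - y) * (f x - f y))
        ≤ |γ t * hy * ((x - y) * (f x - f y))| := le_abs_self _
      _ = |γ t| * |hy| * (|x - y| * |f x - f y|) := by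
          rw [abs_mul (γ t * hy), abs_mul (γ t), abs_mul (x - y)]
      _ ≤ S * (1 + |y|) * (|x - y| * (Lf * |x - y|)) := by
          have h0 : |x - y| * |f x - f y| ≤ |x - y| * (Lf * |x - y|) :=
            mul_le_mul_of_nonneg_left (hf_lip x y) (abs_nonneg _)
          have h1 : |γ t| * |hy| ≤ S * (1 + |y|) := by
            apply mul_le_mul _ hhy_bd (abs_nonneg _) hS0
            rwa [abs_of_nonneg hγt]
          have h2 : 0 ≤ |γ t| * |hy| := by positivity
          have h3 : 0 ≤ |x - y| * (Lf * |x - y|) := by positivity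
          calc |γ t| * |hy| * (|x - y| * |f x - f y|)
              ≤ |γ t| * |hy| * (|x - y| * (Lf * |x - y|)) :=
                mul_le_mul_of_nonneg_left h0 h2
            _ ≤ S * (1 + |y|) * (|x - y| * (Lf * |x - y|)) :=
                mul_le_mul_of_nonneg_right h1 h3
      _ = Lf * S * (1 + |y|) * |x - y| ^ 2 := by ring
  linarith
end

section
/- Local one-step error of the Euler scheme: suppose on the interval [t_k, t_{k+1}] of length h the local solution z_k of z_k' = g(t, z_k), z_k(t_k) = y_k remains, together with y_k, in a set on which g satisfies ‖g(t₁,y₁)−g(t₂,y₂)‖ ≤ L(|t₁−t₂|^α + ‖y₁−y₂‖^β) and on which ‖z_k(t) − y_k‖ ≤ M h for all t ∈ [t_k, t_{k+1}]. Then ‖z_k(t_{k+1}) − (y_k + h g(t_k,y_k))‖ ≤ L·max{1, 2M^β}·h(h^α + h^β). -/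
open Set

/-- Local one-step error of the Euler scheme. -/
theorem euler_stmt_18
    (d : ℕ) (hd : 0 < d)
    (α β L M h : ℝ) (hα : α ∈ Ioc (0:ℝ) 1) (hβ : β ∈ Ioc (0:ℝ) 1)
    (hL : 0 < L) (hM : 0 < M) (hh : h ∈ Ioc (0:ℝ) 1)
    (tk : ℝ) (yk : EuclideanSpace ℝ (Fin d))
    (g : ℝ → EuclideanSpace ℝ (Fin d) → EuclideanSpace ℝ (Fin d))
    (U : Set (EuclideanSpace ℝ (Fin d)))
    (zk : ℝ → EuclideanSpace ℝ (Fin d))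
    (hzk : ∀ t ∈ Icc tk (tk + h), HasDerivWithinAt zk (g t (zk t)) (Icc tk (tk + h)) t)
    (hzk0 : zk tk = yk)
    (hzkU : ∀ t ∈ Icc tk (tk + h), zk t ∈ U) (hykU : yk ∈ U)
    (hg_holder : ∀ t₁ ∈ Icc tk (tk + h), ∀ t₂ ∈ Icc tk (tk + h), ∀ y₁ ∈ U, ∀ y₂ ∈ U,
      ‖g t₁ y₁ - g t₂ y₂‖ ≤ L * (|t₁ - t₂| ^ α + ‖y₁ - y₂‖ ^ β))
    (hclose : ∀ t ∈ Icc tk (tk + h), ‖zk t - yk‖ ≤ M * h) :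
    ‖zk (tk + h) - (yk + h • g tk yk)‖ ≤
      L * max 1 (2 * M ^ β) * h * (h ^ α + h ^ β) := by
  obtain ⟨hα0, hα1⟩ := hα
  obtain ⟨hβ0, hβ1⟩ := hβ
  obtain ⟨hh0, hh1⟩ := hh
  set C := L * (h ^ α + (M * h) ^ β) with hC
  have hmem0 : tk ∈ Icc tk (tk + h) := ⟨le_refl _, by linarith⟩
  have hmem1 : tk + h ∈ Icc tk (tk + h) := ⟨by linarith, le_refl _⟩
  -- derivative bound
  have hbound : ∀ t ∈ Icc tk (tk + h), ‖g t (zk t) - g tk yk‖ ≤ C := by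
    intro t ht
    have h1 := hg_holder t ht tk hmem0 (zk t) (hzkU t ht) yk hykU
    have habs : |t - tk| ≤ h := by
      rw [abs_le]; constructor <;> [linarith [ht.1]; linarith [ht.2]]
    have h2 : |t - tk| ^ α ≤ h ^ α :=
      Real.rpow_le_rpow (abs_nonneg _) habs hα0.le
    have h3 : ‖zk t - yk‖ ^ β ≤ (M * h) ^ β :=
      Real.rpow_le_rpow (norm_nonneg _) (hclose t ht) hβ0.le
    calc ‖g t (zk t) - g tk yk‖ ≤ L * (|t - tk| ^ α + ‖zk t - yk‖ ^ β) := h1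
      _ ≤ C := by rw [hC]; nlinarith
  -- mean value inequality for f t = zk t - t • g tk yk
  have hderiv : ∀ t ∈ Icc tk (tk + h),
      HasDerivWithinAt (fun s => zk s - s • g tk yk) (g t (zk t) - g tk yk)
        (Icc tk (tk + h)) t := by
    intro t ht
    have h2 : HasDerivWithinAt (fun s : ℝ => s • g tk yk) (g tk yk) (Icc tk (tk + h)) t := by
      simpa using ((hasDerivAt_id t).smul_const (g tk yk)).hasDerivWithinAt
    exact (hzk t ht).sub h2
  have hmvt := (convex_Icc tk (tk + h)).norm_image_sub_le_of_norm_hasDerivWithin_le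
    hderiv hbound hmem0 hmem1
  have key : ‖zk (tk + h) - (yk + h • g tk yk)‖ ≤ C * h := by
    have : zk (tk + h) - (tk + h) • g tk yk - (zk tk - tk • g tk yk)
        = zk (tk + h) - (yk + h • g tk yk) := by
      rw [hzk0, add_smul]; abel
    rw [this] at hmvt
    simpa [abs_of_pos hh0] using hmvt
  refine key.trans ?_
  -- arithmetic
  have hMh : (M * h) ^ β = M ^ β * h ^ β := Real.mul_rpow hM.le hh0.le
  have hmax1 : (1 : ℝ) ≤ max 1 (2 * M ^ β) := le_max_left _ _
  have hmax2 : 2 * M ^ β ≤ max 1 (2 * M ^ β) := le_max_right _ _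
  have hMβ : 0 < M ^ β := Real.rpow_pos_of_pos hM _
  have hhα : 0 < h ^ α := Real.rpow_pos_of_pos hh0 _
  have hhβ : 0 < h ^ β := Real.rpow_pos_of_pos hh0 _
  rw [hC, hMh]
  have hmaxβ : M ^ β ≤ max 1 (2 * M ^ β) := by nlinarith
  have step : h ^ α + M ^ β * h ^ β ≤ max 1 (2 * M ^ β) * (h ^ α + h ^ β) := by
    nlinarith [mul_le_mul_of_nonneg_right hmax1 hhα.le,
      mul_le_mul_of_nonneg_right hmaxβ hhβ.le]
  nlinarith [mul_le_mul_of_nonneg_left step (mul_nonneg hL.le hh0.le)]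
end
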